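/- arXiv:2008.13079 — 6 statements merged into one kernel-verified Lean document; each statement's English description precedes it below -/
import Mathlib

section
/- Let φ : (0,∞) → ℂ be measurable, integrable on (0,R) for every R > 0, with ∫₀^∞ e^{−xu}|φ(u)| du < ∞ for every x > 0, and let f(t) = ∫₀^∞ e^{−tu} φ(u) du for t > 0. Suppose moreover that |φ(u)| u^{−Re(γ)−1} → 0 as u → 0⁺ for some γ ∈ ℂ with Re(γ) > −1. Then the series Σ_{n=0}^∞ f(t+n) converges absolutely and locally uniformly on (0,∞), and for every t > 0 one has Σ_{n=0}^∞ f(t+n) = ∫₀^∞ e^{−tu} φ(u)/(1−e^{−u}) du. -/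
open MeasureTheory Filter Set

set_option maxHeartbeats 1000000

noncomputable section

/-- The Laplace transform `ℒ(φ)(t) = ∫₀^∞ e^{−tu} φ(u) du`. -/
def Lap (φ : ℝ → ℂ) (t : ℝ) : ℂ :=
  ∫ u in Ioi (0:ℝ), Complex.exp (-(t * u : ℝ)) * φ u

/-- Membership in the domain `𝒟(ℒ)` of the Laplace transform:
measurable, integrable on `(0,R)` for all `R > 0`, and
`∫₀^∞ e^{−xu} |φ(u)| du < ∞` for every `x > 0`. -/
def MemDL (φ : ℝ → ℂ) : Prop :=
  Measurable φ ∧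
  (∀ R > 0, IntegrableOn φ (Ioo 0 R)) ∧
  (∀ x > 0, IntegrableOn (fun u => Real.exp (-(x * u)) * ‖φ u‖) (Ioi 0))

/-- The forward difference operator with step `h`: `(Δ_h f)(t) = f(t+h) − f(t)`. -/
def Dh (h : ℝ) (f : ℝ → ℂ) : ℝ → ℂ := fun t => f (t + h) - f t

/-- The `n`-th term of the Bernoulli-operator series: `(−1)^n (Δ_h^n f)(t)/(n+1)`. -/
def BTerm (h : ℝ) (f : ℝ → ℂ) (n : ℕ) (t : ℝ) : ℂ :=
  ((-1 : ℂ) ^ n / (n + 1)) * (Dh h)^[n] f t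

/-- The Bernoulli operator `(B_h f)(t) = Σ_{n≥0} (−1)^n (Δ_h^n f)(t)/(n+1)`. -/
def Bop (h : ℝ) (f : ℝ → ℂ) (t : ℝ) : ℂ := ∑' n : ℕ, BTerm h f n t

/-- Generalized binomial coefficient `binom(h,n) = h(h−1)⋯(h−n+1)/n!`. -/
def gbinom (h : ℝ) (n : ℕ) : ℝ :=
  (∏ i ∈ Finset.range n, (h - i)) / n.factorial

/-- The `n`-th term of the Newton series: `binom(h,n) (Δ^n f)(t)`. -/
def NTerm (h : ℝ) (f : ℝ → ℂ) (n : ℕ) (t : ℝ) : ℂ :=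
  (gbinom h n : ℂ) * (Dh 1)^[n] f t

/-- The fractional shift `(E^h f)(t) = Σ_{n≥0} binom(h,n) (Δ^n f)(t)`. -/
def Nop (h : ℝ) (f : ℝ → ℂ) (t : ℝ) : ℂ := ∑' n : ℕ, NTerm h f n t

/-- The series `Σ g n` converges absolutely (pointwise on `S`) and its partial sums
converge locally uniformly on `S`. -/
def ALUOn (g : ℕ → ℝ → ℂ) (S : Set ℝ) : Prop :=
  (∀ t ∈ S, Summable fun n : ℕ => ‖g n t‖) ∧
  TendstoLocallyUniformlyOn (fun N t => ∑ n ∈ Finset.range N, g n t)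
    (fun t => ∑' n : ℕ, g n t) atTop S

/-- The Laplace–Mellin transform `f_{−s}(t) = (1/Γ(s)) ∫₀^∞ e^{−tu} φ(u) u^{s−1} du`. -/
def LM (φ : ℝ → ℂ) (s : ℂ) (t : ℝ) : ℂ :=
  (1 / Complex.Gamma s) *
    ∫ u in Ioi (0:ℝ), Complex.exp (-(t * u : ℝ)) * φ u * (u : ℂ) ^ (s - 1)

/-- `φ(u) = o(u^γ)` as `u → 0⁺`, i.e. `|φ(u)| u^{−Re γ} → 0`. -/
def SmallO (φ : ℝ → ℂ) (γ : ℂ) : Prop :=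
  Tendsto (fun u : ℝ => ‖φ u‖ * u ^ (-γ.re)) (nhdsWithin 0 (Ioi 0)) (nhds 0)

/-- Membership in `𝒟^ι(ℒ)`: `φ ∈ 𝒟(ℒ)` dominated by a nondecreasing `ψ ∈ 𝒟(ℒ)`. -/
def MemDLi (φ : ℝ → ℂ) : Prop :=
  MemDL φ ∧ ∃ ψ : ℝ → ℝ, MemDL (fun u => (ψ u : ℂ)) ∧ MonotoneOn ψ (Ioi 0) ∧
    ∀ u ∈ Ioi (0:ℝ), ‖φ u‖ ≤ ψ u

/-- Membership in the class `ℋ`, with the witness `φ` recorded: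
(1) `t ↦ f(s,t)` differentiable on `(0,∞)`;
(2) `s ↦ f(s,t)` and `s ↦ ∂ₜf(s,t)` entire;
(3) `f(−1,·) = ℒ(φ)` with `φ ∈ 𝒟^ι(ℒ)`;
(4) `f(−s,t)` is the Laplace–Mellin transform of `φ` for `Re s > 1`. -/
def MemHwith (f : ℂ → ℝ → ℂ) (φ : ℝ → ℂ) : Prop :=
  (∀ s : ℂ, ∀ t ∈ Ioi (0:ℝ), DifferentiableAt ℝ (f s) t) ∧
  (∀ t ∈ Ioi (0:ℝ), Differentiable ℂ fun s => f s t) ∧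
  (∀ t ∈ Ioi (0:ℝ), Differentiable ℂ fun s => deriv (f s) t) ∧
  MemDLi φ ∧
  (∀ t ∈ Ioi (0:ℝ), f (-1) t = Lap φ t) ∧
  (∀ s : ℂ, 1 < s.re → ∀ t ∈ Ioi (0:ℝ), f (-s) t = LM φ s t)

/-- Membership in the class `ℋ`. -/
def MemH (f : ℂ → ℝ → ℂ) : Prop := ∃ φ : ℝ → ℂ, MemHwith f φ

/-- The Hurwitz zeta function `ζ(s,x)` for real `x > 0`: the meromorphic continuation in `s`
of `Σ_{k≥0} (k+x)^{−s}`, expressed via Mathlib's `HurwitzZeta.hurwitzZeta` on `ℝ/ℤ`. -/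
def hurwitz (s : ℂ) (x : ℝ) : ℂ :=
  HurwitzZeta.hurwitzZeta (↑x : UnitAddCircle) s -
    ∑ k ∈ Finset.range ⌊x⌋₊,
      (if (k : ℝ) + Int.fract x = 0 then 0
       else (((k : ℝ) + Int.fract x : ℝ) : ℂ) ^ (-s))

end

/- ### Auxiliary lemmas -/

lemma norm_exp_mul (r : ℝ) (z : ℂ) :
    ‖Complex.exp (-(r : ℂ)) * z‖ = Real.exp (-r) * ‖z‖ := by
  rw [norm_mul]
  congr 1
  rw [Complex.norm_exp]
  norm_num

lemma hasSum_geom_real {u : ℝ} (hu : 0 < u) (t b : ℝ) :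
    HasSum (fun n : ℕ => Real.exp (-((t + n) * u)) * b)
      (Real.exp (-(t * u)) * b / (1 - Real.exp (-u))) := by
  have h1 : Real.exp (-u) < 1 := Real.exp_lt_one_iff.mpr (by linarith)
  have h := (hasSum_geometric_of_lt_one (Real.exp_nonneg _) h1).mul_left
    (Real.exp (-(t * u)) * b)
  have hfun : (fun n : ℕ => Real.exp (-((t + n) * u)) * b) =
      fun n : ℕ => Real.exp (-(t * u)) * b * Real.exp (-u) ^ n := by
    funext n
    rw [show -((t + n) * u) = -(t * u) + n * (-u) by ring, Real.exp_add,
      Real.exp_nat_mul]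
    ring
  rw [hfun, div_eq_mul_inv]
  exact h

lemma hasSum_geom_complex {u : ℝ} (hu : 0 < u) (t : ℝ) (z : ℂ) :
    HasSum (fun n : ℕ => Complex.exp (-(((t + n) * u : ℝ) : ℂ)) * z)
      (Complex.exp (-((t * u : ℝ) : ℂ)) * (z / (1 - Complex.exp (-(u : ℂ))))) := by
  have h1 : ‖Complex.exp (-(u : ℂ))‖ < 1 := by
    rw [Complex.norm_exp]
    simp only [Complex.neg_re, Complex.ofReal_re]
    exact Real.exp_lt_one_iff.mpr (by linarith)
  have h := (hasSum_geometric_of_norm_lt_one h1).mul_left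
    (Complex.exp (-((t * u : ℝ) : ℂ)) * z)
  have hfun : (fun n : ℕ => Complex.exp (-(((t + n) * u : ℝ) : ℂ)) * z) =
      fun n : ℕ => Complex.exp (-((t * u : ℝ) : ℂ)) * z * Complex.exp (-(u : ℂ)) ^ n := by
    funext n
    rw [show (-(((t + n) * u : ℝ) : ℂ)) = -((t * u : ℝ) : ℂ) + (n : ℂ) * (-(u : ℂ))
        by push_cast; ring,
      Complex.exp_add, Complex.exp_nat_mul]
    ring
  have hval : Complex.exp (-((t * u : ℝ) : ℂ)) * (z / (1 - Complex.exp (-(u : ℂ)))) =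
      Complex.exp (-((t * u : ℝ) : ℂ)) * z * (1 - Complex.exp (-(u : ℂ)))⁻¹ := by
    rw [div_eq_mul_inv]; ring
  rw [hfun, hval]
  exact h

lemma G_integrable (φ : ℝ → ℂ) (hmeas : Measurable φ)
    (hint : ∀ x > 0, IntegrableOn (fun u => Real.exp (-(x * u)) * ‖φ u‖) (Ioi 0))
    (γ : ℂ) (hγ : -1 < γ.re) (hsm : SmallO φ (γ + 1)) {x : ℝ} (hx : 0 < x) :
    IntegrableOn (fun u => Real.exp (-(x * u)) * ‖φ u‖ / (1 - Real.exp (-u))) (Ioi 0) := by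
  have hGmeas : Measurable fun u => Real.exp (-(x * u)) * ‖φ u‖ / (1 - Real.exp (-u)) :=
    ((Real.measurable_exp.comp ((measurable_const.mul measurable_id).neg)).mul
      hmeas.norm).div (measurable_const.sub (Real.measurable_exp.comp measurable_id.neg))
  have hre : -(γ + 1).re = -(γ.re + 1) := by simp
  have h0 : ∀ᶠ u in nhdsWithin 0 (Ioi 0), ‖φ u‖ * u ^ (-(γ.re + 1)) < 1 := by
    have := hsm.eventually (gt_mem_nhds zero_lt_one)
    simpa [hre] using this
  obtain ⟨δ, hδmem, hδ⟩ := mem_nhdsGT_iff_exists_Ioo_subset.mp h0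
  have hδ0 : (0:ℝ) < δ := hδmem
  set ε : ℝ := min δ 1 with hεdef
  have hε : (0:ℝ) < ε := lt_min hδ0 zero_lt_one
  have hε1 : ε ≤ 1 := min_le_right _ _
  have hsplit : Ioo (0:ℝ) ε ∪ Ici ε = Ioi 0 := Ioo_union_Ici_eq_Ioi hε
  rw [← hsplit]
  refine IntegrableOn.union ?_ ?_
  · -- near zero
    have hbound : IntegrableOn (fun u : ℝ => Real.exp 1 * u ^ γ.re) (Ioo 0 ε) :=
      Integrable.const_mul ((intervalIntegral.integrableOn_Ioo_rpow_iff hε).mpr hγ) (Real.exp 1)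
    refine hbound.mono' hGmeas.aestronglyMeasurable ?_
    filter_upwards [ae_restrict_mem measurableSet_Ioo] with u hu
    have hu0 : 0 < u := hu.1
    have hu1 : u < 1 := lt_of_lt_of_le hu.2 hε1
    have huδ : u < δ := lt_of_lt_of_le hu.2 (min_le_left _ _)
    have hφu : ‖φ u‖ ≤ u ^ (γ.re + 1) := by
      have h1 : ‖φ u‖ * u ^ (-(γ.re + 1)) < 1 := hδ ⟨hu0, huδ⟩
      have h2 : (0:ℝ) < u ^ (γ.re + 1) := Real.rpow_pos_of_pos hu0 _
      calc ‖φ u‖ = ‖φ u‖ * u ^ (-(γ.re + 1)) * u ^ (γ.re + 1) := by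
            rw [mul_assoc, ← Real.rpow_add hu0,
              show -(γ.re + 1) + (γ.re + 1) = 0 by ring, Real.rpow_zero, mul_one]
        _ ≤ 1 * u ^ (γ.re + 1) := mul_le_mul_of_nonneg_right h1.le h2.le
        _ = u ^ (γ.re + 1) := one_mul _
    have hden : u * Real.exp (-1) ≤ 1 - Real.exp (-u) := by
      have h2 : u + 1 ≤ Real.exp u := Real.add_one_le_exp u
      have h3 : Real.exp (-1) ≤ Real.exp (-u) := Real.exp_le_exp.mpr (by linarith)
      have h4 : Real.exp (-u) * (Real.exp u - 1) = 1 - Real.exp (-u) := by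
        rw [mul_sub, ← Real.exp_add, neg_add_cancel, Real.exp_zero, mul_one]
      calc u * Real.exp (-1) ≤ u * Real.exp (-u) :=
            mul_le_mul_of_nonneg_left h3 hu0.le
        _ ≤ Real.exp (-u) * (Real.exp u - 1) := by
            rw [mul_comm]
            exact mul_le_mul_of_nonneg_left (by linarith) (Real.exp_pos _).le
        _ = 1 - Real.exp (-u) := h4
    have hdenpos : 0 < 1 - Real.exp (-u) :=
      lt_of_lt_of_le (by positivity) hden
    have hGn : ‖Real.exp (-(x * u)) * ‖φ u‖ / (1 - Real.exp (-u))‖ =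
        Real.exp (-(x * u)) * ‖φ u‖ / (1 - Real.exp (-u)) :=
      Real.norm_of_nonneg (div_nonneg (by positivity) hdenpos.le)
    rw [hGn]
    have hnum : Real.exp (-(x * u)) * ‖φ u‖ ≤ u ^ (γ.re + 1) := by
      have he1 : Real.exp (-(x * u)) ≤ 1 := Real.exp_le_one_iff.mpr (by nlinarith)
      calc Real.exp (-(x * u)) * ‖φ u‖ ≤ 1 * u ^ (γ.re + 1) :=
            mul_le_mul he1 hφu (norm_nonneg _) zero_le_one
        _ = u ^ (γ.re + 1) := one_mul _
    calc Real.exp (-(x * u)) * ‖φ u‖ / (1 - Real.exp (-u))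
        ≤ u ^ (γ.re + 1) / (u * Real.exp (-1)) :=
          div_le_div₀ (Real.rpow_pos_of_pos hu0 _).le hnum (by positivity) hden
      _ = Real.exp 1 * u ^ γ.re := by
          rw [Real.rpow_add hu0, Real.rpow_one, Real.exp_neg]
          field_simp
  · -- away from zero
    have hsub : Ici ε ⊆ Ioi (0:ℝ) := fun u hu => lt_of_lt_of_le hε hu
    have hbase := Integrable.const_mul ((hint x hx).mono_set hsub) ((1 - Real.exp (-ε))⁻¹)
    refine hbase.mono' hGmeas.aestronglyMeasurable ?_
    filter_upwards [ae_restrict_mem measurableSet_Ici] with u hu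
    have hu0 : 0 < u := lt_of_lt_of_le hε hu
    have hdε : 0 < 1 - Real.exp (-ε) := by
      have : Real.exp (-ε) < 1 := Real.exp_lt_one_iff.mpr (by linarith)
      linarith
    have huε : ε ≤ u := hu
    have hd : 1 - Real.exp (-ε) ≤ 1 - Real.exp (-u) := by
      have : Real.exp (-u) ≤ Real.exp (-ε) := Real.exp_le_exp.mpr (by linarith)
      linarith
    have hGn : ‖Real.exp (-(x * u)) * ‖φ u‖ / (1 - Real.exp (-u))‖ =
        Real.exp (-(x * u)) * ‖φ u‖ / (1 - Real.exp (-u)) :=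
      Real.norm_of_nonneg (div_nonneg (by positivity) (by linarith))
    rw [hGn]
    calc Real.exp (-(x * u)) * ‖φ u‖ / (1 - Real.exp (-u))
        ≤ Real.exp (-(x * u)) * ‖φ u‖ / (1 - Real.exp (-ε)) :=
          div_le_div_of_nonneg_left (by positivity) hdε hd
      _ = (1 - Real.exp (-ε))⁻¹ * (Real.exp (-(x * u)) * ‖φ u‖) := by
          rw [div_eq_mul_inv, mul_comm]

lemma summable_c (φ : ℝ → ℂ) (hmeas : Measurable φ)
    (hint : ∀ x > 0, IntegrableOn (fun u => Real.exp (-(x * u)) * ‖φ u‖) (Ioi 0))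
    (γ : ℂ) (hγ : -1 < γ.re) (hsm : SmallO φ (γ + 1)) {x : ℝ} (hx : 0 < x) :
    Summable fun n : ℕ => ∫ u in Ioi (0:ℝ), Real.exp (-((x + n) * u)) * ‖φ u‖ := by
  have hmg : ∀ n : ℕ, Measurable fun u : ℝ => Real.exp (-((x + n) * u)) * ‖φ u‖ :=
    fun n => (Real.measurable_exp.comp ((measurable_const.mul measurable_id).neg)).mul
      hmeas.norm
  have hG := G_integrable φ hmeas hint γ hγ hsm hx
  have hkey : (∑' n : ℕ, ∫⁻ u in Ioi (0:ℝ),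
        ENNReal.ofReal (Real.exp (-((x + n) * u)) * ‖φ u‖)) =
      ∫⁻ u in Ioi (0:ℝ),
        ENNReal.ofReal (Real.exp (-(x * u)) * ‖φ u‖ / (1 - Real.exp (-u))) := by
    rw [← lintegral_tsum (fun n => ((hmg n).ennreal_ofReal).aemeasurable)]
    refine setLIntegral_congr_fun measurableSet_Ioi (fun u hu => ?_)
    have hs := hasSum_geom_real (mem_Ioi.mp hu) x ‖φ u‖
    rw [← hs.tsum_eq, ← ENNReal.ofReal_tsum_of_nonneg (fun n => by positivity) hs.summable]
  have hfin : (∫⁻ u in Ioi (0:ℝ),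
      ENNReal.ofReal (Real.exp (-(x * u)) * ‖φ u‖ / (1 - Real.exp (-u)))) < ⊤ := by
    refine lt_of_le_of_lt (lintegral_mono fun u => ?_) hG.2
    rw [← ofReal_norm_eq_enorm]
    exact ENNReal.ofReal_le_ofReal (by rw [Real.norm_eq_abs]; exact le_abs_self _)
  have heq : ∀ n : ℕ, (∫ u in Ioi (0:ℝ), Real.exp (-((x + n) * u)) * ‖φ u‖) =
      (∫⁻ u in Ioi (0:ℝ), ENNReal.ofReal (Real.exp (-((x + n) * u)) * ‖φ u‖)).toReal :=
    fun n => integral_eq_lintegral_of_nonneg_ae (ae_of_all _ fun u => by positivity)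
      (hmg n).aestronglyMeasurable
  simp only [heq]
  exact ENNReal.summable_toReal (by rw [hkey]; exact hfin.ne)

/-- if `φ ∈ 𝒟(ℒ)`, `f = ℒ(φ)` and `φ(u) = o(u^{γ+1})` as `u → 0⁺` with
`Re γ > −1`, then `Σ_{n≥0} f(t+n)` converges absolutely and locally uniformly on `(0,∞)` and
equals `∫₀^∞ e^{−tu} φ(u)/(1−e^{−u})` for every `t > 0`. -/
theorem stmt0 (φ : ℝ → ℂ) (hφ : MemDL φ) (γ : ℂ) (hγ : -1 < γ.re)
    (hsm : SmallO φ (γ + 1)) :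
    ALUOn (fun n t => Lap φ (t + n)) (Ioi 0) ∧
    ∀ t ∈ Ioi (0:ℝ),
      ∑' n : ℕ, Lap φ (t + n) =
        ∫ u in Ioi (0:ℝ),
          Complex.exp (-(t * u : ℝ)) * (φ u / (1 - Complex.exp (-(u : ℝ)))) := by
  obtain ⟨hmeas, hloc, hint⟩ := hφ
  have hc : ∀ x : ℝ, 0 < x →
      Summable fun n : ℕ => ∫ u in Ioi (0:ℝ), Real.exp (-((x + n) * u)) * ‖φ u‖ :=
    fun x hx => summable_c φ hmeas hint γ hγ hsm hx
  have hFmeas : ∀ y : ℝ, AEStronglyMeasurable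
      (fun u : ℝ => Complex.exp (-((y * u : ℝ) : ℂ)) * φ u) (volume.restrict (Ioi 0)) :=
    fun y => Measurable.aestronglyMeasurable (by fun_prop)
  have hFint : ∀ y : ℝ, 0 < y →
      IntegrableOn (fun u : ℝ => Complex.exp (-((y * u : ℝ) : ℂ)) * φ u) (Ioi 0) :=
    fun y hy => Integrable.mono' (hint y hy) (hFmeas y)
      (ae_of_all _ fun u => le_of_eq (norm_exp_mul (y * u) (φ u)))
  have hnormint : ∀ y : ℝ, (∫ u in Ioi (0:ℝ), ‖Complex.exp (-((y * u : ℝ) : ℂ)) * φ u‖) =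
      ∫ u in Ioi (0:ℝ), Real.exp (-(y * u)) * ‖φ u‖ :=
    fun y => integral_congr_ae (ae_of_all _ fun u => norm_exp_mul _ _)
  have hbound : ∀ a : ℝ, 0 < a → ∀ n : ℕ, ∀ x : ℝ, a ≤ x →
      ‖Lap φ (x + n)‖ ≤ ∫ u in Ioi (0:ℝ), Real.exp (-((a + n) * u)) * ‖φ u‖ := by
    intro a ha n x hax
    have hx : 0 < x := lt_of_lt_of_le ha hax
    calc ‖Lap φ (x + n)‖
        ≤ ∫ u in Ioi (0:ℝ), ‖Complex.exp (-(((x + n) * u : ℝ) : ℂ)) * φ u‖ :=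
          norm_integral_le_integral_norm _
      _ = ∫ u in Ioi (0:ℝ), Real.exp (-((x + n) * u)) * ‖φ u‖ := hnormint (x + n)
      _ ≤ ∫ u in Ioi (0:ℝ), Real.exp (-((a + n) * u)) * ‖φ u‖ := by
          refine setIntegral_mono_on (hint (x + n) (by positivity))
            (hint (a + n) (by positivity)) measurableSet_Ioi fun u hu => ?_
          have hu0 : 0 < u := mem_Ioi.mp hu
          have hexp : Real.exp (-((x + n) * u)) ≤ Real.exp (-((a + n) * u)) :=
            Real.exp_le_exp.mpr (by nlinarith)
          exact mul_le_mul_of_nonneg_right hexp (norm_nonneg _)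
  constructor
  · constructor
    · intro t ht
      exact Summable.of_nonneg_of_le (fun n => norm_nonneg _)
        (fun n => hbound t ht n t le_rfl) (hc t ht)
    · rw [tendstoLocallyUniformlyOn_iff_forall_isCompact isOpen_Ioi]
      intro K hK hKc
      rcases K.eq_empty_or_nonempty with rfl | hne
      · exact tendstoUniformlyOn_empty
      · have haK := hKc.sInf_mem hne
        have ha : 0 < sInf K := hK haK
        exact tendstoUniformlyOn_tsum_nat (hc _ ha)
          (fun n x hx => hbound _ ha n x (csInf_le hKc.bddBelow hx))
  · intro t ht
    have ht' : (0:ℝ) < t := ht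
    have hsumnorm : Summable fun n : ℕ =>
        ∫ u in Ioi (0:ℝ), ‖Complex.exp (-(((t + n) * u : ℝ) : ℂ)) * φ u‖ := by
      simp only [hnormint]
      exact hc t ht'
    have hHS := hasSum_integral_of_summable_integral_norm
      (F := fun (n : ℕ) (u : ℝ) => Complex.exp (-(((t + n) * u : ℝ) : ℂ)) * φ u)
      (μ := volume.restrict (Ioi 0))
      (fun n => hFint (t + n) (by positivity)) hsumnorm
    have htsum := hHS.tsum_eq
    calc ∑' n : ℕ, Lap φ (t + n)
        = ∫ u in Ioi (0:ℝ), ∑' n : ℕ, Complex.exp (-(((t + n) * u : ℝ) : ℂ)) * φ u := htsum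
      _ = ∫ u in Ioi (0:ℝ),
          Complex.exp (-(t * u : ℝ)) * (φ u / (1 - Complex.exp (-(u : ℝ)))) := by
          refine setIntegral_congr_fun measurableSet_Ioi fun u hu => ?_
          exact (hasSum_geom_complex (mem_Ioi.mp hu) t (φ u)).tsum_eq
end

section
/- Let φ ∈ 𝒟(ℒ), f = ℒ(φ), and h > 0. Then the series (B_h f)(t) = Σ_{n=0}^∞ (−1)^n (Δ_h^n f)(t)/(n+1) converges absolutely and locally uniformly on (0,∞), and for every t > 0 one has (B_h f)(t) = ∫₀^∞ e^{−tu} (hu/(1−e^{−hu})) φ(u) du. -/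
open MeasureTheory Filter Set

namespace Stmt1Aux

open MeasureTheory Filter Set

lemma meas1 {φ : ℝ → ℂ} (hm : Measurable φ) (t h : ℝ) (n : ℕ) :
    AEStronglyMeasurable
      (fun u : ℝ => Complex.exp (-(t * u : ℝ)) * (Complex.exp (-(h * u : ℝ)) - 1) ^ n * φ u)
      (volume.restrict (Ioi 0)) := by
  apply Measurable.aestronglyMeasurable
  fun_prop

lemma norm_eq {φ : ℝ → ℂ} (h t : ℝ) (n : ℕ) {u : ℝ} (hu : 0 < u) (hh : 0 < h) :
    ‖Complex.exp (-(t * u : ℝ)) * (Complex.exp (-(h * u : ℝ)) - 1) ^ n * φ u‖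
      = Real.exp (-(t * u)) * (1 - Real.exp (-(h * u))) ^ n * ‖φ u‖ := by
  have he : Real.exp (-(h * u)) ≤ 1 := Real.exp_le_one_iff.mpr (neg_nonpos.mpr (mul_pos hh hu).le)
  have h1 : Complex.exp (-(h * u : ℝ)) - 1 = ((Real.exp (-(h * u)) - 1 : ℝ) : ℂ) := by
    push_cast [Complex.ofReal_exp]
    ring
  rw [h1, norm_mul, norm_mul, norm_pow]
  rw [Complex.norm_exp, Complex.norm_real, Real.norm_eq_abs]
  rw [abs_of_nonpos (by linarith), neg_sub]
  norm_num

lemma integrableOn_Fn {φ : ℝ → ℂ} (hφ : MemDL φ) {h t : ℝ} (hh : 0 < h) (ht : 0 < t) (n : ℕ) :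
    IntegrableOn
      (fun u : ℝ => Complex.exp (-(t * u : ℝ)) * (Complex.exp (-(h * u : ℝ)) - 1) ^ n * φ u)
      (Ioi 0) := by
  apply Integrable.mono' (hφ.2.2 t ht) (meas1 hφ.1 t h n)
  filter_upwards [ae_restrict_mem measurableSet_Ioi] with u hu
  rw [norm_eq h t n hu hh]
  have hx0 : (0:ℝ) ≤ 1 - Real.exp (-(h * u)) :=
    sub_nonneg.mpr (Real.exp_le_one_iff.mpr (neg_nonpos.mpr (mul_pos hh (mem_Ioi.mp hu)).le))
  have hx1 : 1 - Real.exp (-(h * u)) ≤ 1 := by nlinarith [Real.exp_pos (-(h * u))]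
  have hp : (1 - Real.exp (-(h * u))) ^ n ≤ 1 := pow_le_one₀ hx0 hx1
  have h0 : (0:ℝ) ≤ Real.exp (-(t * u)) := (Real.exp_pos _).le
  have h2 : (0:ℝ) ≤ ‖φ u‖ := norm_nonneg _
  calc Real.exp (-(t * u)) * (1 - Real.exp (-(h * u))) ^ n * ‖φ u‖
      ≤ Real.exp (-(t * u)) * 1 * ‖φ u‖ := by
        apply mul_le_mul_of_nonneg_right (mul_le_mul_of_nonneg_left hp h0) h2
    _ = Real.exp (-(t * u)) * ‖φ u‖ := by ring

lemma iterate_Dh {φ : ℝ → ℂ} (hφ : MemDL φ) {h : ℝ} (hh : 0 < h) (n : ℕ) :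
    ∀ t, 0 < t → (Dh h)^[n] (Lap φ) t
      = ∫ u in Ioi (0:ℝ),
          Complex.exp (-(t * u : ℝ)) * (Complex.exp (-(h * u : ℝ)) - 1) ^ n * φ u := by
  induction n with
  | zero =>
      intro t ht
      simp [Lap]
  | succ n ih =>
      intro t ht
      rw [Function.iterate_succ_apply']
      have h1 := ih (t + h) (by linarith)
      have h2 := ih t ht
      simp only [Dh, h1, h2]
      rw [← integral_sub (integrableOn_Fn hφ hh (by linarith) n) (integrableOn_Fn hφ hh ht n)]
      apply setIntegral_congr_fun measurableSet_Ioi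
      intro u hu
      have hexp : Complex.exp (-((t + h) * u : ℝ))
          = Complex.exp (-(t * u : ℝ)) * Complex.exp (-(h * u : ℝ)) := by
        rw [← Complex.exp_add]
        congr 1
        push_cast
        ring
      simp only [hexp]
      ring

lemma BTerm_eq {φ : ℝ → ℂ} (hφ : MemDL φ) {h t : ℝ} (hh : 0 < h) (ht : 0 < t) (n : ℕ) :
    BTerm h (Lap φ) n t
      = ∫ u in Ioi (0:ℝ), Complex.exp (-(t * u : ℝ)) *
          (((1 - Real.exp (-(h * u)) : ℝ) : ℂ) ^ n / (n + 1)) * φ u := by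
  rw [BTerm, iterate_Dh hφ hh n t ht, ← integral_const_mul]
  apply setIntegral_congr_fun measurableSet_Ioi
  intro u hu
  beta_reduce
  have h1 : ((1 - Real.exp (-(h * u)) : ℝ) : ℂ) = (-1) * (Complex.exp (-(h * u : ℝ)) - 1) := by
    push_cast [Complex.ofReal_exp]
    ring
  simp only [h1, mul_pow]
  ring

lemma norm_G {φ : ℝ → ℂ} (h t : ℝ) (n : ℕ) {u : ℝ} (hu : 0 < u) (hh : 0 < h) :
    ‖Complex.exp (-(t * u : ℝ)) *
        (((1 - Real.exp (-(h * u)) : ℝ) : ℂ) ^ n / (n + 1)) * φ u‖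
      = Real.exp (-(t * u)) * ((1 - Real.exp (-(h * u))) ^ n / (n + 1)) * ‖φ u‖ := by
  have hx0 : (0:ℝ) ≤ 1 - Real.exp (-(h * u)) :=
    sub_nonneg.mpr (Real.exp_le_one_iff.mpr (neg_nonpos.mpr (mul_pos hh hu).le))
  have key : Complex.exp (-(t * u : ℝ)) *
      (((1 - Real.exp (-(h * u)) : ℝ) : ℂ) ^ n / (n + 1))
      = ((Real.exp (-(t * u)) * ((1 - Real.exp (-(h * u))) ^ n / (n + 1)) : ℝ) : ℂ) := by
    push_cast [Complex.ofReal_exp]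
    ring
  rw [norm_mul, key, Complex.norm_real, Real.norm_eq_abs, abs_of_nonneg]
  exact mul_nonneg (Real.exp_pos _).le
    (div_nonneg (pow_nonneg hx0 n) (by positivity))

lemma measG {φ : ℝ → ℂ} (hm : Measurable φ) (t h : ℝ) (n : ℕ) :
    AEStronglyMeasurable
      (fun u : ℝ => Complex.exp (-(t * u : ℝ)) *
        (((1 - Real.exp (-(h * u)) : ℝ) : ℂ) ^ n / (n + 1)) * φ u)
      (volume.restrict (Ioi 0)) := by
  apply Measurable.aestronglyMeasurable
  fun_prop

lemma integrable_G {φ : ℝ → ℂ} (hφ : MemDL φ) {h t : ℝ} (hh : 0 < h) (ht : 0 < t) (n : ℕ) :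
    IntegrableOn
      (fun u : ℝ => Complex.exp (-(t * u : ℝ)) *
        (((1 - Real.exp (-(h * u)) : ℝ) : ℂ) ^ n / (n + 1)) * φ u)
      (Ioi 0) := by
  apply Integrable.mono' (hφ.2.2 t ht) (measG hφ.1 t h n)
  filter_upwards [ae_restrict_mem measurableSet_Ioi] with u hu
  rw [norm_G h t n hu hh]
  have hx0 : (0:ℝ) ≤ 1 - Real.exp (-(h * u)) :=
    sub_nonneg.mpr (Real.exp_le_one_iff.mpr (neg_nonpos.mpr (mul_pos hh (mem_Ioi.mp hu)).le))
  have hx1 : 1 - Real.exp (-(h * u)) ≤ 1 := by nlinarith [Real.exp_pos (-(h * u))]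
  have hp : (1 - Real.exp (-(h * u))) ^ n ≤ 1 := pow_le_one₀ hx0 hx1
  have hd : (1 - Real.exp (-(h * u))) ^ n / (n + 1) ≤ 1 := by
    exact div_le_one_of_le₀ (le_trans hp (le_add_of_nonneg_left (Nat.cast_nonneg n))) (by positivity)
  have h0 : (0:ℝ) ≤ Real.exp (-(t * u)) := (Real.exp_pos _).le
  have h2 : (0:ℝ) ≤ ‖φ u‖ := norm_nonneg _
  calc Real.exp (-(t * u)) * ((1 - Real.exp (-(h * u))) ^ n / (n + 1)) * ‖φ u‖
      ≤ Real.exp (-(t * u)) * 1 * ‖φ u‖ := by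
        apply mul_le_mul_of_nonneg_right (mul_le_mul_of_nonneg_left hd h0) h2
    _ = Real.exp (-(t * u)) * ‖φ u‖ := by ring

lemma measg {φ : ℝ → ℂ} (hm : Measurable φ) (t h : ℝ) (n : ℕ) :
    AEStronglyMeasurable
      (fun u : ℝ => Real.exp (-(t * u)) * ((1 - Real.exp (-(h * u))) ^ n / (n + 1)) * ‖φ u‖)
      (volume.restrict (Ioi 0)) := by
  apply Measurable.aestronglyMeasurable
  fun_prop

lemma integrable_g {φ : ℝ → ℂ} (hφ : MemDL φ) {h t : ℝ} (hh : 0 < h) (ht : 0 < t) (n : ℕ) :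
    IntegrableOn
      (fun u : ℝ => Real.exp (-(t * u)) * ((1 - Real.exp (-(h * u))) ^ n / (n + 1)) * ‖φ u‖)
      (Ioi 0) := by
  apply Integrable.mono' (hφ.2.2 t ht) (measg hφ.1 t h n)
  filter_upwards [ae_restrict_mem measurableSet_Ioi] with u hu
  have hx0 : (0:ℝ) ≤ 1 - Real.exp (-(h * u)) :=
    sub_nonneg.mpr (Real.exp_le_one_iff.mpr (neg_nonpos.mpr (mul_pos hh (mem_Ioi.mp hu)).le))
  have hx1 : 1 - Real.exp (-(h * u)) ≤ 1 := by nlinarith [Real.exp_pos (-(h * u))]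
  have hp : (1 - Real.exp (-(h * u))) ^ n ≤ 1 := pow_le_one₀ hx0 hx1
  have hd : (1 - Real.exp (-(h * u))) ^ n / (n + 1) ≤ 1 := by
    exact div_le_one_of_le₀ (le_trans hp (le_add_of_nonneg_left (Nat.cast_nonneg n))) (by positivity)
  have h0 : (0:ℝ) ≤ Real.exp (-(t * u)) := (Real.exp_pos _).le
  have h2 : (0:ℝ) ≤ ‖φ u‖ := norm_nonneg _
  rw [Real.norm_of_nonneg (by positivity)]
  calc Real.exp (-(t * u)) * ((1 - Real.exp (-(h * u))) ^ n / (n + 1)) * ‖φ u‖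
      ≤ Real.exp (-(t * u)) * 1 * ‖φ u‖ := by
        apply mul_le_mul_of_nonneg_right (mul_le_mul_of_nonneg_left hd h0) h2
    _ = Real.exp (-(t * u)) * ‖φ u‖ := by ring

lemma hasSum_ratio {h u : ℝ} (hh : 0 < h) (hu : 0 < u) :
    HasSum (fun n : ℕ => (1 - Real.exp (-(h * u))) ^ n / (n + 1))
      (h * u / (1 - Real.exp (-(h * u)))) := by
  set X := 1 - Real.exp (-(h * u)) with hX
  have hX0 : 0 < X := by
    have : Real.exp (-(h * u)) < 1 := Real.exp_lt_one_iff.mpr (neg_lt_zero.mpr (mul_pos hh hu))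
    simp only [hX]
    linarith
  have hX1 : X < 1 := by
    have := Real.exp_pos (-(h * u))
    simp only [hX]
    linarith
  have hlog : HasSum (fun n : ℕ => X ^ (n + 1) / (n + 1)) (h * u) := by
    have h1 := Real.hasSum_pow_div_log_of_abs_lt_one (x := X) (by rw [abs_of_pos hX0]; exact hX1)
    have h2 : -Real.log (1 - X) = h * u := by
      rw [hX]
      simp [Real.log_exp]
    rwa [h2] at h1
  have h3 := hlog.div_const X
  have h4 : (fun n : ℕ => X ^ (n + 1) / (n + 1) / X) = fun n : ℕ => X ^ n / (n + 1) := by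
    funext n
    rw [pow_succ]
    field_simp
  rwa [h4] at h3

lemma partial_bound {h u : ℝ} (hh : 0 < h) (hu : 0 < u) (N : Finset ℕ) :
    ∑ n ∈ N, (1 - Real.exp (-(h * u))) ^ n / (n + 1) ≤ 1 + h * u := by
  have hX0 : 0 < 1 - Real.exp (-(h * u)) := by
    have : Real.exp (-(h * u)) < 1 := Real.exp_lt_one_iff.mpr (neg_lt_zero.mpr (mul_pos hh hu))
    linarith
  have h1 : ∑ n ∈ N, (1 - Real.exp (-(h * u))) ^ n / (n + 1)
      ≤ h * u / (1 - Real.exp (-(h * u))) :=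
    sum_le_hasSum N (fun i _ => by positivity) (hasSum_ratio hh hu)
  have hE := Real.add_one_le_exp (h * u)
  have hI : Real.exp (-(h * u)) * Real.exp (h * u) = 1 := by
    rw [← Real.exp_add]; simp
  have h3 : Real.exp (-(h * u)) * (h * u + 1) ≤ 1 := by
    calc Real.exp (-(h * u)) * (h * u + 1)
        ≤ Real.exp (-(h * u)) * Real.exp (h * u) :=
          mul_le_mul_of_nonneg_left hE (Real.exp_pos _).le
      _ = 1 := hI
  have h2 : h * u / (1 - Real.exp (-(h * u))) ≤ 1 + h * u := by
    rw [div_le_iff₀ hX0]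
    nlinarith
  linarith

lemma hasSum_C {h u : ℝ} (hh : 0 < h) (hu : 0 < u) :
    HasSum (fun n : ℕ => ((1 - Real.exp (-(h * u)) : ℝ) : ℂ) ^ n / (n + 1))
      (((h * u : ℝ) : ℂ) / ((1 - Real.exp (-(h * u)) : ℝ) : ℂ)) := by
  have h1 : HasSum
      (fun n : ℕ => (((1 - Real.exp (-(h * u))) ^ n / (n + 1) : ℝ) : ℂ))
      (((h * u / (1 - Real.exp (-(h * u))) : ℝ)) : ℂ) :=
    Complex.hasSum_ofReal.mpr (hasSum_ratio hh hu)
  have h2 : (fun n : ℕ => (((1 - Real.exp (-(h * u))) ^ n / (n + 1) : ℝ) : ℂ))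
      = fun n : ℕ => ((1 - Real.exp (-(h * u)) : ℝ) : ℂ) ^ n / (n + 1) := by
    funext n
    push_cast
    ring
  have h3 : (((h * u / (1 - Real.exp (-(h * u))) : ℝ)) : ℂ)
      = ((h * u : ℝ) : ℂ) / ((1 - Real.exp (-(h * u)) : ℝ) : ℂ) := by
    push_cast
    ring
  rw [h2, h3] at h1
  exact h1

noncomputable def Mn (φ : ℝ → ℂ) (h t : ℝ) (n : ℕ) : ℝ :=
  ∫ u in Ioi (0:ℝ), Real.exp (-(t * u)) * ((1 - Real.exp (-(h * u))) ^ n / (n + 1)) * ‖φ u‖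

lemma measb {φ : ℝ → ℂ} (hm : Measurable φ) (t h : ℝ) :
    AEStronglyMeasurable
      (fun u : ℝ => Real.exp (-(t * u)) * (1 + h * u) * ‖φ u‖)
      (volume.restrict (Ioi 0)) := by
  apply Measurable.aestronglyMeasurable
  fun_prop

lemma integrable_bound {φ : ℝ → ℂ} (hφ : MemDL φ) {h t : ℝ} (hh : 0 < h) (ht : 0 < t) :
    IntegrableOn (fun u : ℝ => Real.exp (-(t * u)) * (1 + h * u) * ‖φ u‖) (Ioi 0) := by
  have base := ((hφ.2.2 (t / 2) (by linarith)).const_mul (1 + 2 * h / t))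
  apply Integrable.mono' base (measb hφ.1 t h)
  filter_upwards [ae_restrict_mem measurableSet_Ioi] with u hu
  have hu0 : 0 < u := mem_Ioi.mp hu
  have h1 : Real.exp (-(t * u)) = Real.exp (-(t / 2 * u)) * Real.exp (-(t / 2 * u)) := by
    rw [← Real.exp_add]; ring_nf
  have h2 : t / 2 * u + 1 ≤ Real.exp (t / 2 * u) := Real.add_one_le_exp _
  have h3 : Real.exp (-(t / 2 * u)) * Real.exp (t / 2 * u) = 1 := by
    rw [← Real.exp_add]; simp
  have h4 : Real.exp (-(t / 2 * u)) ≤ 1 :=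
    Real.exp_le_one_iff.mpr (neg_nonpos.mpr (by positivity))
  have hA : 0 < Real.exp (-(t / 2 * u)) := Real.exp_pos _
  have h6 : Real.exp (-(t / 2 * u)) * (t / 2 * u + 1) ≤ 1 := by
    calc Real.exp (-(t / 2 * u)) * (t / 2 * u + 1)
        ≤ Real.exp (-(t / 2 * u)) * Real.exp (t / 2 * u) :=
          mul_le_mul_of_nonneg_left h2 hA.le
      _ = 1 := h3
  have h5 : u * Real.exp (-(t / 2 * u)) ≤ 2 / t := by
    rw [le_div_iff₀ ht]
    nlinarith
  have hn : (0:ℝ) ≤ ‖φ u‖ := norm_nonneg _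
  have h7 : Real.exp (-(t / 2 * u)) * (1 + h * u) ≤ 1 + 2 * h / t := by
    have h8 : h * (u * Real.exp (-(t / 2 * u))) ≤ h * (2 / t) :=
      mul_le_mul_of_nonneg_left h5 hh.le
    have h9 : h * (2 / t) = 2 * h / t := by
      ring
    nlinarith [h8, h9, h4]
  rw [Real.norm_of_nonneg (by positivity), h1]
  calc Real.exp (-(t / 2 * u)) * Real.exp (-(t / 2 * u)) * (1 + h * u) * ‖φ u‖
      = (Real.exp (-(t / 2 * u)) * (1 + h * u)) * (Real.exp (-(t / 2 * u)) * ‖φ u‖) := by ring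
    _ ≤ (1 + 2 * h / t) * (Real.exp (-(t / 2 * u)) * ‖φ u‖) := by
        apply mul_le_mul_of_nonneg_right h7 (by positivity)

lemma summable_Mn {φ : ℝ → ℂ} (hφ : MemDL φ) {h t : ℝ} (hh : 0 < h) (ht : 0 < t) :
    Summable (Mn φ h t) := by
  apply summable_of_sum_range_le
    (c := ∫ u in Ioi (0:ℝ), Real.exp (-(t * u)) * (1 + h * u) * ‖φ u‖)
  · intro n
    exact setIntegral_nonneg measurableSet_Ioi fun u hu => by
      have hx0 : (0:ℝ) ≤ 1 - Real.exp (-(h * u)) :=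
        sub_nonneg.mpr (Real.exp_le_one_iff.mpr (neg_nonpos.mpr (mul_pos hh (mem_Ioi.mp hu)).le))
      positivity
  · intro N
    simp only [Mn]
    rw [← integral_finset_sum _ (fun i _ => integrable_g hφ hh ht i)]
    apply setIntegral_mono_on
    · exact integrable_finset_sum _ (fun i _ => integrable_g hφ hh ht i)
    · exact integrable_bound hφ hh ht
    · exact measurableSet_Ioi
    · intro u hu
      have hu0 : 0 < u := mem_Ioi.mp hu
      have hb := partial_bound hh hu0 (Finset.range N)
      have h0 : (0:ℝ) ≤ Real.exp (-(t * u)) := (Real.exp_pos _).le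
      have hn : (0:ℝ) ≤ ‖φ u‖ := norm_nonneg _
      calc ∑ n ∈ Finset.range N,
            Real.exp (-(t * u)) * ((1 - Real.exp (-(h * u))) ^ n / (n + 1)) * ‖φ u‖
          = Real.exp (-(t * u)) *
            (∑ n ∈ Finset.range N, (1 - Real.exp (-(h * u))) ^ n / (n + 1)) * ‖φ u‖ := by
            rw [Finset.mul_sum, Finset.sum_mul]
        _ ≤ Real.exp (-(t * u)) * (1 + h * u) * ‖φ u‖ := by
            apply mul_le_mul_of_nonneg_right _ hn
            exact mul_le_mul_of_nonneg_left hb h0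

lemma norm_BTerm_le {φ : ℝ → ℂ} (hφ : MemDL φ) {h a t : ℝ} (hh : 0 < h) (ha : 0 < a)
    (hta : a ≤ t) (n : ℕ) : ‖BTerm h (Lap φ) n t‖ ≤ Mn φ h a n := by
  have ht : 0 < t := lt_of_lt_of_le ha hta
  rw [BTerm_eq hφ hh ht n]
  calc ‖∫ u in Ioi (0:ℝ), Complex.exp (-(t * u : ℝ)) *
          (((1 - Real.exp (-(h * u)) : ℝ) : ℂ) ^ n / (n + 1)) * φ u‖
      ≤ ∫ u in Ioi (0:ℝ), ‖Complex.exp (-(t * u : ℝ)) *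
          (((1 - Real.exp (-(h * u)) : ℝ) : ℂ) ^ n / (n + 1)) * φ u‖ :=
        norm_integral_le_integral_norm _
    _ = ∫ u in Ioi (0:ℝ),
          Real.exp (-(t * u)) * ((1 - Real.exp (-(h * u))) ^ n / (n + 1)) * ‖φ u‖ := by
        apply setIntegral_congr_fun measurableSet_Ioi
        intro u hu
        exact norm_G h t n (mem_Ioi.mp hu) hh
    _ ≤ Mn φ h a n := by
        apply setIntegral_mono_on (integrable_g hφ hh ht n) (integrable_g hφ hh ha n)
          measurableSet_Ioi
        intro u hu
        have hu0 : 0 < u := mem_Ioi.mp hu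
        have hx0 : (0:ℝ) ≤ 1 - Real.exp (-(h * u)) :=
          sub_nonneg.mpr (Real.exp_le_one_iff.mpr (neg_nonpos.mpr (mul_pos hh hu0).le))
        have he : Real.exp (-(t * u)) ≤ Real.exp (-(a * u)) :=
          Real.exp_le_exp.mpr (by nlinarith [mul_le_mul_of_nonneg_right hta hu0.le])
        apply mul_le_mul_of_nonneg_right _ (norm_nonneg _)
        apply mul_le_mul_of_nonneg_right he (by positivity)

lemma summable_norm_BTerm {φ : ℝ → ℂ} (hφ : MemDL φ) {h t : ℝ} (hh : 0 < h) (ht : 0 < t) :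
    Summable fun n : ℕ => ‖BTerm h (Lap φ) n t‖ :=
  Summable.of_nonneg_of_le (fun n => norm_nonneg _)
    (fun n => norm_BTerm_le hφ hh ht le_rfl n) (summable_Mn hφ hh ht)

lemma eq_part {φ : ℝ → ℂ} (hφ : MemDL φ) {h t : ℝ} (hh : 0 < h) (ht : 0 < t) :
    Bop h (Lap φ) t
      = ∫ u in Ioi (0:ℝ), Complex.exp (-(t * u : ℝ)) *
          (((h * u : ℝ) : ℂ) / (1 - Complex.exp (-(h * u : ℝ)))) * φ u := by
  rw [Bop]
  rw [tsum_congr (fun n => BTerm_eq hφ hh ht n)]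
  rw [MeasureTheory.integral_tsum_of_summable_integral_norm
    (fun n => integrable_G hφ hh ht n) ?_]
  · apply setIntegral_congr_fun measurableSet_Ioi
    intro u hu
    beta_reduce
    have hu0 : 0 < u := mem_Ioi.mp hu
    have h1 := ((hasSum_C (u := u) hh hu0).mul_left (Complex.exp (-(t * u : ℝ)))).mul_right (φ u)
    have h2 : (1 : ℂ) - Complex.exp (-(h * u : ℝ)) = ((1 - Real.exp (-(h * u)) : ℝ) : ℂ) := by
      push_cast [Complex.ofReal_exp]
      ring
    simp only [h2]
    exact h1.tsum_eq
  · apply Summable.congr (summable_Mn hφ hh ht)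
    intro n
    rw [Mn]
    apply setIntegral_congr_fun measurableSet_Ioi
    intro u hu
    exact (norm_G h t n (mem_Ioi.mp hu) hh).symm

end Stmt1Aux

/-- for `φ ∈ 𝒟(ℒ)`, `f = ℒ(φ)`, `h > 0`, the Bernoulli series of `f` with step `h`
converges absolutely and locally uniformly on `(0,∞)` and
`(B_h f)(t) = ∫₀^∞ e^{−tu} (hu/(1−e^{−hu})) φ(u) du` for every `t > 0`. -/
theorem stmt1 (φ : ℝ → ℂ) (hφ : MemDL φ) (h : ℝ) (hh : 0 < h) :
    ALUOn (BTerm h (Lap φ)) (Ioi 0) ∧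
    ∀ t ∈ Ioi (0:ℝ),
      Bop h (Lap φ) t =
        ∫ u in Ioi (0:ℝ),
          Complex.exp (-(t * u : ℝ)) *
            (((h * u : ℝ) : ℂ) / (1 - Complex.exp (-(h * u : ℝ)))) * φ u := by
  refine ⟨⟨fun t ht => Stmt1Aux.summable_norm_BTerm hφ hh (mem_Ioi.mp ht), ?_⟩,
    fun t ht => Stmt1Aux.eq_part hφ hh (mem_Ioi.mp ht)⟩
  rw [tendstoLocallyUniformlyOn_iff_forall_isCompact isOpen_Ioi]
  intro K hK hKc
  rcases K.eq_empty_or_nonempty with rfl | hne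
  · exact tendstoUniformlyOn_empty
  · obtain ⟨a, haK, hlb⟩ := hKc.exists_isLeast hne
    have ha : 0 < a := mem_Ioi.mp (hK haK)
    exact tendstoUniformlyOn_tsum_nat (Stmt1Aux.summable_Mn hφ hh ha)
      (fun n x hx => Stmt1Aux.norm_BTerm_le hφ hh ha (hlb hx) n)
end

section
/- Let φ ∈ 𝒟(ℒ), f = ℒ(φ), and h > 0. Then the series (ln(id+Δ_h)f)(t) := −Σ_{n=0}^∞ (−1)^{n+1} (Δ_h^{n+1} f)(t)/(n+1) converges absolutely and locally uniformly on (0,∞), and for every t > 0 it equals h f′(t) = −h ∫₀^∞ e^{−tu} u φ(u) du. -/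
open MeasureTheory Filter Set

namespace Stmt2Aux

variable {φ : ℝ → ℂ} {h a t : ℝ}

lemma int_mul_exp_norm (hφ : MemDL φ) (ht : 0 < t) :
    IntegrableOn (fun u => u * (Real.exp (-(t * u)) * ‖φ u‖)) (Ioi 0) := by
  have h2 : (0:ℝ) < t/2 := by positivity
  have key : ∀ u : ℝ, 0 < u → u * Real.exp (-(t * u)) ≤ 2/t * Real.exp (-(t/2 * u)) := by
    intro u hu
    have e1 : Real.exp (-(t*u)) = Real.exp (-(t/2*u)) * Real.exp (-(t/2*u)) := by
      rw [← Real.exp_add]; ring_nf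
    have e2 : u * Real.exp (-(t/2*u)) ≤ 2/t := by
      rw [Real.exp_neg, mul_inv_le_iff₀' (Real.exp_pos _)]
      have h5 := Real.add_one_le_exp (t/2*u)
      have h3 : (0:ℝ) < 2/t := by positivity
      have h6 := mul_le_mul_of_nonneg_right h5 h3.le
      have h7 : (t/2*u+1)*(2/t) = u + 2/t := by field_simp
      have h8 : 2/t * Real.exp (t/2*u) = Real.exp (t/2*u) * (2/t) := mul_comm _ _
      linarith
    calc u * Real.exp (-(t*u)) = (u * Real.exp (-(t/2*u))) * Real.exp (-(t/2*u)) := by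
          rw [e1]; ring
      _ ≤ 2/t * Real.exp (-(t/2*u)) :=
          mul_le_mul_of_nonneg_right e2 (Real.exp_pos _).le
  refine Integrable.mono' ((hφ.2.2 (t/2) h2).const_mul (2/t)) ?_ ?_
  · exact (measurable_id.mul
      (((measurable_id.const_mul t).neg.exp).mul hφ.1.norm)).aestronglyMeasurable
  · rw [ae_restrict_iff' measurableSet_Ioi]
    filter_upwards with u hu
    rw [mem_Ioi] at hu
    rw [Real.norm_of_nonneg (by positivity)]
    calc u * (Real.exp (-(t*u)) * ‖φ u‖) = (u * Real.exp (-(t*u))) * ‖φ u‖ := by ring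
      _ ≤ (2/t * Real.exp (-(t/2*u))) * ‖φ u‖ :=
          mul_le_mul_of_nonneg_right (key u hu) (norm_nonneg _)
      _ = 2/t * (Real.exp (-(t/2*u)) * ‖φ u‖) := by ring


lemma ker_integrable (hφ : MemDL φ) (hh : 0 < h) (ht : 0 < t) (n : ℕ) :
    IntegrableOn (fun u => ((Real.exp (-(t*u)) : ℝ) : ℂ) *
      ((Real.exp (-(h*u)) - 1 : ℝ) : ℂ)^n * φ u) (Ioi 0) := by
  refine Integrable.mono' (hφ.2.2 t ht) ?_ ?_
  · refine AEStronglyMeasurable.mul (AEStronglyMeasurable.mul ?_ ?_) hφ.1.aestronglyMeasurable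
    · exact (Complex.measurable_ofReal.comp
        ((measurable_id.const_mul t).neg.exp)).aestronglyMeasurable
    · exact ((Complex.measurable_ofReal.comp
        (((measurable_id.const_mul h).neg.exp).sub measurable_const)).pow_const n).aestronglyMeasurable
  · rw [ae_restrict_iff' measurableSet_Ioi]
    filter_upwards with u hu
    rw [mem_Ioi] at hu
    have hx0 : 0 < Real.exp (-(h*u)) := Real.exp_pos _
    have hx1 : Real.exp (-(h*u)) ≤ 1 := Real.exp_le_one_iff.2 (by nlinarith)
    have hXn : ‖((Real.exp (-(h*u)) - 1 : ℝ) : ℂ)^n‖ ≤ 1 := by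
      rw [norm_pow, Complex.norm_real]
      refine pow_le_one₀ (norm_nonneg _) ?_
      rw [Real.norm_eq_abs, abs_le]; constructor <;> nlinarith
    calc ‖((Real.exp (-(t*u)) : ℝ) : ℂ) * ((Real.exp (-(h*u)) - 1 : ℝ) : ℂ)^n * φ u‖
        = Real.exp (-(t*u)) * ‖((Real.exp (-(h*u)) - 1 : ℝ) : ℂ)^n‖ * ‖φ u‖ := by
          rw [norm_mul, norm_mul, Complex.norm_real, Real.norm_of_nonneg (Real.exp_pos _).le]
      _ ≤ Real.exp (-(t*u)) * 1 * ‖φ u‖ := by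
          gcongr
      _ = Real.exp (-(t*u)) * ‖φ u‖ := by ring

lemma iter_Dh (hφ : MemDL φ) (hh : 0 < h) (n : ℕ) (ht : 0 < t) :
    (Dh h)^[n] (Lap φ) t = ∫ u in Ioi (0:ℝ), ((Real.exp (-(t*u)) : ℝ) : ℂ) *
      ((Real.exp (-(h*u)) - 1 : ℝ) : ℂ)^n * φ u := by
  induction n generalizing t with
  | zero =>
    simp only [Function.iterate_zero, id_eq, pow_zero, mul_one, Lap]
    refine setIntegral_congr_fun measurableSet_Ioi fun u hu => ?_
    rw [Complex.ofReal_exp, Complex.ofReal_neg, Complex.ofReal_mul]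
  | succ n ih =>
    rw [Function.iterate_succ_apply']
    have hth : 0 < t + h := by linarith
    show (Dh h)^[n] (Lap φ) (t + h) - (Dh h)^[n] (Lap φ) t = _
    rw [ih hth, ih ht, ← integral_sub (ker_integrable hφ hh hth n) (ker_integrable hφ hh ht n)]
    refine setIntegral_congr_fun measurableSet_Ioi fun u hu => ?_
    have hre : Real.exp (-((t+h)*u)) = Real.exp (-(t*u)) * ((Real.exp (-(h*u)) - 1) + 1) := by
      rw [sub_add_cancel, ← Real.exp_add]; ring_nf
    rw [hre]
    push_cast
    ring


noncomputable def gker (φ : ℝ → ℂ) (h a : ℝ) (n : ℕ) (u : ℝ) : ℝ :=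
  Real.exp (-(a*u)) * ((1 - Real.exp (-(h*u)))^(n+1)/(n+1)) * ‖φ u‖

lemma exp_mem (hh : 0 < h) {u : ℝ} (hu : 0 < u) :
    0 < Real.exp (-(h*u)) ∧ Real.exp (-(h*u)) < 1 :=
  ⟨Real.exp_pos _, Real.exp_lt_one_iff.2 (by nlinarith)⟩

lemma gker_nonneg (hh : 0 < h) {n : ℕ} {u : ℝ} (hu : 0 < u) : 0 ≤ gker φ h a n u := by
  obtain ⟨h1, h2⟩ := exp_mem hh hu
  have : (0:ℝ) ≤ 1 - Real.exp (-(h*u)) := by linarith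
  unfold gker
  have : (0:ℝ) ≤ (1 - Real.exp (-(h*u)))^(n+1)/(n+1) := by positivity
  positivity

lemma gker_hasSum (hh : 0 < h) {u : ℝ} (hu : 0 < u) :
    HasSum (fun n => gker φ h a n u) (Real.exp (-(a*u)) * (h*u) * ‖φ u‖) := by
  obtain ⟨h1, h2⟩ := exp_mem hh hu
  have habs : |1 - Real.exp (-(h*u))| < 1 := by rw [abs_lt]; constructor <;> nlinarith
  have S := Real.hasSum_pow_div_log_of_abs_lt_one habs
  have e1 : 1 - (1 - Real.exp (-(h*u))) = Real.exp (-(h*u)) := by ring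
  rw [e1, Real.log_exp, neg_neg] at S
  unfold gker
  exact (S.mul_left (Real.exp (-(a*u)))).mul_right ‖φ u‖

lemma gker_integrable (hφ : MemDL φ) (hh : 0 < h) (ha : 0 < a) (n : ℕ) :
    IntegrableOn (gker φ h a n) (Ioi 0) := by
  refine Integrable.mono' (hφ.2.2 a ha) ?_ ?_
  · exact (((measurable_id.const_mul a).neg.exp).mul
      (((((measurable_id.const_mul h).neg.exp).const_sub 1).pow_const (n+1)).div_const _)).mul
      hφ.1.norm |>.aestronglyMeasurable
  · rw [ae_restrict_iff' measurableSet_Ioi]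
    filter_upwards with u hu
    rw [mem_Ioi] at hu
    obtain ⟨h1, h2⟩ := exp_mem hh hu
    have hx : (0:ℝ) ≤ 1 - Real.exp (-(h*u)) := by linarith
    have hle : (1 - Real.exp (-(h*u)))^(n+1)/(n+1) ≤ 1 := by
      have p1 : (1 - Real.exp (-(h*u)))^(n+1) ≤ 1 := pow_le_one₀ hx (by linarith)
      have p2 : (1:ℝ) ≤ (n:ℝ)+1 := by exact_mod_cast Nat.one_le_iff_ne_zero.2 (Nat.succ_ne_zero n)
      calc (1 - Real.exp (-(h*u)))^(n+1)/(n+1) ≤ 1/1 := by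
            apply div_le_div₀ (by norm_num) p1 one_pos p2
        _ = 1 := by norm_num
    rw [Real.norm_of_nonneg (gker_nonneg hh hu)]
    unfold gker
    calc Real.exp (-(a*u)) * ((1 - Real.exp (-(h*u)))^(n+1)/(n+1)) * ‖φ u‖
        ≤ Real.exp (-(a*u)) * 1 * ‖φ u‖ := by
          gcongr
      _ = Real.exp (-(a*u)) * ‖φ u‖ := by ring

lemma summable_Ibd (hφ : MemDL φ) (hh : 0 < h) (ha : 0 < a) :
    Summable (fun n => ∫ u in Ioi (0:ℝ), gker φ h a n u) := by
  have hmeas : ∀ n : ℕ, Measurable (gker φ h a n) := fun n =>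
    (((measurable_id.const_mul a).neg.exp).mul
      (((((measurable_id.const_mul h).neg.exp).const_sub 1).pow_const (n+1)).div_const _)).mul
      hφ.1.norm
  have key : ∑' n : ℕ, ∫⁻ u in Ioi (0:ℝ), ENNReal.ofReal (gker φ h a n u) ≠ ⊤ := by
    rw [← lintegral_tsum (fun n => ((hmeas n).ennreal_ofReal).aemeasurable)]
    have hcongr : ∫⁻ u in Ioi (0:ℝ), ∑' n : ℕ, ENNReal.ofReal (gker φ h a n u)
        = ∫⁻ u in Ioi (0:ℝ), ENNReal.ofReal (Real.exp (-(a*u)) * (h*u) * ‖φ u‖) := by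
      refine lintegral_congr_ae ?_
      filter_upwards [ae_restrict_mem measurableSet_Ioi] with u hu
      rw [mem_Ioi] at hu
      rw [← ENNReal.ofReal_tsum_of_nonneg (fun n => gker_nonneg hh hu)
        (gker_hasSum hh hu).summable, (gker_hasSum hh hu).tsum_eq]
    rw [hcongr]
    have hint : IntegrableOn (fun u => Real.exp (-(a*u)) * (h*u) * ‖φ u‖) (Ioi (0:ℝ)) := by
      have e : (fun u => Real.exp (-(a*u)) * (h*u) * ‖φ u‖)
          = fun u => h * (u * (Real.exp (-(a*u)) * ‖φ u‖)) := by funext u; ring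
      rw [e]
      exact (int_mul_exp_norm hφ ha).const_mul h
    exact hint.lintegral_lt_top.ne
  have := ENNReal.summable_toReal key
  refine this.congr fun n => ?_
  rw [integral_eq_lintegral_of_nonneg_ae ?_ (hmeas n).aestronglyMeasurable]
  · filter_upwards [ae_restrict_mem measurableSet_Ioi] with u hu
    exact gker_nonneg hh (mem_Ioi.mp hu)


lemma norm_cn (n : ℕ) : ‖((-1:ℂ)^(n+1)/((n:ℂ)+1))‖ = 1/((n:ℝ)+1) := by
  have h2 : ‖((n:ℂ)+1)‖ = (n:ℝ)+1 := by
    have h3 := Complex.norm_natCast (n+1)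
    push_cast at h3
    exact h3
  rw [norm_div, norm_pow, norm_neg, norm_one, one_pow, h2]

lemma norm_kern_eq (hh : 0 < h) (n : ℕ) {u : ℝ} (hu : 0 < u) :
    ‖((-1:ℂ)^(n+1)/((n:ℂ)+1)) * (((Real.exp (-(t*u)) : ℝ) : ℂ) *
      ((Real.exp (-(h*u)) - 1 : ℝ) : ℂ)^(n+1) * φ u)‖ = gker φ h t n u := by
  obtain ⟨h1, h2⟩ := exp_mem hh hu
  have hXn : ‖((Real.exp (-(h*u)) - 1 : ℝ) : ℂ)^(n+1)‖ = (1 - Real.exp (-(h*u)))^(n+1) := by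
    rw [norm_pow, Complex.norm_real, Real.norm_eq_abs, abs_sub_comm,
      abs_of_nonneg (by linarith)]
  rw [norm_mul, norm_cn, norm_mul, norm_mul, Complex.norm_real,
    Real.norm_of_nonneg (Real.exp_pos _).le, hXn]
  unfold gker
  ring

lemma gker_mono (hh : 0 < h) (hat : a ≤ t) (n : ℕ) {u : ℝ} (hu : 0 < u) :
    gker φ h t n u ≤ gker φ h a n u := by
  obtain ⟨h1, h2⟩ := exp_mem hh hu
  have hx : (0:ℝ) ≤ 1 - Real.exp (-(h*u)) := by linarith
  unfold gker
  have hq : (0:ℝ) ≤ (1 - Real.exp (-(h*u)))^(n+1)/(n+1) := by positivity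
  gcongr

lemma norm_term_le (hφ : MemDL φ) (hh : 0 < h) (ha : 0 < a) (hat : a ≤ t) (n : ℕ) :
    ‖-(((-1:ℂ)^(n+1)/((n:ℂ)+1)) * (Dh h)^[n+1] (Lap φ) t)‖
      ≤ ∫ u in Ioi (0:ℝ), gker φ h a n u := by
  have ht : 0 < t := lt_of_lt_of_le ha hat
  rw [norm_neg, iter_Dh hφ hh (n+1) ht, ← integral_const_mul]
  refine norm_integral_le_of_norm_le (gker_integrable hφ hh ha n) ?_
  filter_upwards [ae_restrict_mem measurableSet_Ioi] with u hu
  rw [mem_Ioi] at hu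
  rw [norm_kern_eq hh n hu]
  exact gker_mono hh hat n hu

lemma log_hasSum (hh : 0 < h) {u : ℝ} (hu : 0 < u) :
    HasSum (fun n : ℕ => (1 - Real.exp (-(h*u)))^(n+1)/((n:ℝ)+1)) (h*u) := by
  obtain ⟨h1, h2⟩ := exp_mem hh hu
  have habs : |1 - Real.exp (-(h*u))| < 1 := by rw [abs_lt]; constructor <;> nlinarith
  have S := Real.hasSum_pow_div_log_of_abs_lt_one habs
  have e1 : 1 - (1 - Real.exp (-(h*u))) = Real.exp (-(h*u)) := by ring
  rw [e1, Real.log_exp, neg_neg] at S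
  exact S

lemma hasSum_main (hφ : MemDL φ) (hh : 0 < h) (ht : 0 < t) :
    HasSum (fun n : ℕ => -(((-1:ℂ)^(n+1)/((n:ℂ)+1)) * (Dh h)^[n+1] (Lap φ) t))
      (-((h:ℂ) * ∫ u in Ioi (0:ℝ), ((Real.exp (-(t*u)) : ℝ) : ℂ) * (u:ℂ) * φ u)) := by
  set F : ℕ → ℝ → ℂ := fun n u => -(((-1:ℂ)^(n+1)/((n:ℂ)+1)) *
    (((Real.exp (-(t*u)) : ℝ) : ℂ) * ((Real.exp (-(h*u)) - 1 : ℝ) : ℂ)^(n+1) * φ u)) with hF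
  have hInt : ∀ n, Integrable (F n) (volume.restrict (Ioi (0:ℝ))) := fun n =>
    ((ker_integrable hφ hh ht (n+1)).const_mul _).neg
  have hnorm : ∀ n, ∫ u in Ioi (0:ℝ), ‖F n u‖ = ∫ u in Ioi (0:ℝ), gker φ h t n u := by
    intro n
    refine integral_congr_ae ?_
    filter_upwards [ae_restrict_mem measurableSet_Ioi] with u hu
    rw [mem_Ioi] at hu
    rw [hF]
    simp only [norm_neg]
    exact norm_kern_eq hh n hu
  have hsum : Summable fun n => ∫ u in Ioi (0:ℝ), ‖F n u‖ :=
    (summable_Ibd hφ hh ht).congr fun n => (hnorm n).symm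
  have key := hasSum_integral_of_summable_integral_norm hInt hsum
  have hterm : ∀ n, (∫ u in Ioi (0:ℝ), F n u) =
      -(((-1:ℂ)^(n+1)/((n:ℂ)+1)) * (Dh h)^[n+1] (Lap φ) t) := by
    intro n
    rw [hF]
    simp only
    rw [integral_neg, integral_const_mul, iter_Dh hφ hh (n+1) ht]
  have hlim : (∫ u in Ioi (0:ℝ), ∑' n, F n u) =
      -((h:ℂ) * ∫ u in Ioi (0:ℝ), ((Real.exp (-(t*u)) : ℝ) : ℂ) * (u:ℂ) * φ u) := by
    have step1 : (∫ u in Ioi (0:ℝ), ∑' n, F n u) =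
        ∫ u in Ioi (0:ℝ), -((h:ℂ) * (((Real.exp (-(t*u)) : ℝ) : ℂ) * (u:ℂ) * φ u)) := by
      refine integral_congr_ae ?_
      filter_upwards [ae_restrict_mem measurableSet_Ioi] with u hu
      rw [mem_Ioi] at hu
      have S := log_hasSum hh hu
      have Sc : HasSum (fun n : ℕ =>
          (((1 - Real.exp (-(h*u)))^(n+1)/((n:ℝ)+1) : ℝ) : ℂ)) (((h*u : ℝ)) : ℂ) :=
        Complex.hasSum_ofReal.mpr S
      have Sc2 := ((Sc.mul_left ((Real.exp (-(t*u)) : ℝ) : ℂ)).mul_right (φ u)).neg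
      have hfn : (fun n : ℕ => -(((Real.exp (-(t*u)) : ℝ) : ℂ) *
          (((1 - Real.exp (-(h*u)))^(n+1)/((n:ℝ)+1) : ℝ) : ℂ) * φ u)) = fun n => F n u := by
        funext n
        rw [hF]
        simp only
        have e1 : (((1 - Real.exp (-(h*u)))^(n+1)/((n:ℝ)+1) : ℝ) : ℂ) =
            ((-1:ℂ)^(n+1)/((n:ℂ)+1)) * ((Real.exp (-(h*u)) - 1 : ℝ) : ℂ)^(n+1) := by
          have e2 : ((1 - Real.exp (-(h*u)) : ℝ) : ℂ) =
              (-1) * ((Real.exp (-(h*u)) - 1 : ℝ) : ℂ) := by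
            rw [Complex.ofReal_sub, Complex.ofReal_sub]
            ring
          have e3 : (((n:ℝ)+1 : ℝ) : ℂ) = (n:ℂ)+1 := by push_cast; ring
          rw [Complex.ofReal_div, Complex.ofReal_pow, e2, mul_pow, e3]
          ring
        rw [e1]
        ring
      have Sc3 := hfn ▸ Sc2
      rw [Sc3.tsum_eq]
      push_cast
      ring
    rw [step1, integral_neg, integral_const_mul]
  rw [← hlim]
  have : (fun n : ℕ => -(((-1:ℂ)^(n+1)/((n:ℂ)+1)) * (Dh h)^[n+1] (Lap φ) t)) =
      fun n => ∫ u in Ioi (0:ℝ), F n u := by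
    funext n; rw [hterm n]
  rw [this]
  exact key


lemma hasDeriv_Lap (hφ : MemDL φ) (ht : 0 < t) :
    HasDerivAt (Lap φ)
      (-(∫ u in Ioi (0:ℝ), ((Real.exp (-(t*u)) : ℝ) : ℂ) * (u:ℂ) * φ u)) t := by
  have hε : (0:ℝ) < t/2 := by positivity
  have hmeasF : ∀ x : ℝ, AEStronglyMeasurable (fun u : ℝ => Complex.exp (-(x * u : ℝ)) * φ u)
      (volume.restrict (Ioi (0:ℝ))) := by
    intro x
    exact (Complex.measurable_exp.comp
      ((Complex.measurable_ofReal.comp (measurable_id.const_mul x)).neg)).mul hφ.1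
      |>.aestronglyMeasurable
  have hexp_norm : ∀ (x u : ℝ), ‖Complex.exp (-(x * u : ℝ))‖ = Real.exp (-(x*u)) := by
    intro x u
    rw [Complex.norm_exp]
    norm_num
  have key := hasDerivAt_integral_of_dominated_loc_of_deriv_le (μ := volume.restrict (Ioi (0:ℝ)))
    (F := fun (x : ℝ) (u : ℝ) => Complex.exp (-(x * u : ℝ)) * φ u)
    (F' := fun (x : ℝ) (u : ℝ) => (-(u:ℂ)) * (Complex.exp (-(x * u : ℝ)) * φ u))
    (x₀ := t) (bound := fun u => u * (Real.exp (-(t/2 * u)) * ‖φ u‖)) (Metric.ball_mem_nhds t hε)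
    (Eventually.of_forall hmeasF) ?_ ?_ ?_ ?_ ?_
  · have e : (∫ u in Ioi (0:ℝ), (-(u:ℂ)) * (Complex.exp (-(t * u : ℝ)) * φ u)) =
        -(∫ u in Ioi (0:ℝ), ((Real.exp (-(t*u)) : ℝ) : ℂ) * (u:ℂ) * φ u) := by
      rw [← integral_neg]
      refine setIntegral_congr_fun measurableSet_Ioi fun u hu => ?_
      rw [Complex.ofReal_exp, Complex.ofReal_neg, Complex.ofReal_mul]
      ring
    rw [e] at key
    exact key.2
  · -- Integrable (F t)
    refine Integrable.mono' (hφ.2.2 t ht) (hmeasF t) ?_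
    filter_upwards with u
    rw [norm_mul, hexp_norm]
  · -- AEStronglyMeasurable (F' t)
    exact (Complex.measurable_ofReal.neg.mul ((Complex.measurable_exp.comp
      ((Complex.measurable_ofReal.comp (measurable_id.const_mul t)).neg)).mul hφ.1)).aestronglyMeasurable
  · -- bound
    rw [ae_restrict_iff' measurableSet_Ioi]
    filter_upwards with u hu
    rw [mem_Ioi] at hu
    intro x hx
    rw [Metric.mem_ball, Real.dist_eq, abs_lt] at hx
    have hx2 : t/2 ≤ x := by linarith
    rw [norm_mul, norm_mul, hexp_norm, norm_neg, Complex.norm_real,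
      Real.norm_of_nonneg hu.le]
    have : Real.exp (-(x*u)) ≤ Real.exp (-(t/2*u)) := Real.exp_le_exp.2 (by nlinarith)
    calc u * (Real.exp (-(x*u)) * ‖φ u‖) ≤ u * (Real.exp (-(t/2*u)) * ‖φ u‖) := by gcongr
      _ = u * (Real.exp (-(t/2 * u)) * ‖φ u‖) := rfl
  · -- bound integrable
    exact int_mul_exp_norm hφ (by positivity)
  · -- HasDerivAt
    filter_upwards with u
    intro x hx
    have base : HasDerivAt (fun z : ℂ => Complex.exp ((-(u:ℂ)) * z))
        (Complex.exp ((-(u:ℂ)) * (x:ℂ)) * ((-(u:ℂ)) * 1)) (x:ℂ) :=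
      ((hasDerivAt_id (x:ℂ)).const_mul (-(u:ℂ))).cexp
    have D := (base.comp_ofReal).mul_const (φ u)
    have efun : (fun y : ℝ => Complex.exp ((-(u:ℂ)) * (y:ℂ)) * φ u) =
        fun y : ℝ => Complex.exp (-(y * u : ℝ)) * φ u := by
      funext y
      congr 1
      congr 1
      push_cast
      ring
    rw [efun] at D
    refine D.congr_deriv ?_
    rw [show ((-(u:ℂ)) * (x:ℂ)) = (-(x * u : ℝ) : ℂ) by push_cast; ring]
    ring

end Stmt2Aux

/-- for `φ ∈ 𝒟(ℒ)`, `f = ℒ(φ)`, `h > 0`, the series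
`(ln(id+Δ_h)f)(t) = −Σ_{n≥0} (−1)^{n+1} (Δ_h^{n+1} f)(t)/(n+1)` converges absolutely and
locally uniformly on `(0,∞)` and equals `h f′(t) = −h ∫₀^∞ e^{−tu} u φ(u) du` for `t > 0`. -/


theorem stmt2 (φ : ℝ → ℂ) (hφ : MemDL φ) (h : ℝ) (hh : 0 < h) :
    ALUOn (fun n t => -(((-1 : ℂ) ^ (n + 1) / (n + 1)) * (Dh h)^[n + 1] (Lap φ) t)) (Ioi 0) ∧
    ∀ t ∈ Ioi (0:ℝ),
      (∑' n : ℕ, -(((-1 : ℂ) ^ (n + 1) / (n + 1)) * (Dh h)^[n + 1] (Lap φ) t))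
        = (h : ℂ) * deriv (Lap φ) t ∧
      (h : ℂ) * deriv (Lap φ) t =
        -(h : ℂ) * ∫ u in Ioi (0:ℝ), Complex.exp (-(t * u : ℝ)) * (u : ℂ) * φ u := by
  constructor
  · constructor
    · intro t ht
      rw [mem_Ioi] at ht
      exact Summable.of_nonneg_of_le (fun n => norm_nonneg _)
        (fun n => Stmt2Aux.norm_term_le hφ hh ht le_rfl n) (Stmt2Aux.summable_Ibd hφ hh ht)
    · rw [tendstoLocallyUniformlyOn_iff_forall_isCompact isOpen_Ioi]
      intro K hK hKc
      rcases K.eq_empty_or_nonempty with rfl | hne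
      · exact tendstoUniformlyOn_empty
      · have haK : sInf K ∈ K := hKc.sInf_mem hne
        have ha : 0 < sInf K := hK haK
        exact tendstoUniformlyOn_tsum_nat (Stmt2Aux.summable_Ibd hφ hh ha)
          (fun n x hx => Stmt2Aux.norm_term_le hφ hh ha (csInf_le hKc.bddBelow hx) n)
  · intro t ht
    rw [mem_Ioi] at ht
    have HD := (Stmt2Aux.hasDeriv_Lap hφ ht).deriv
    have HS := (Stmt2Aux.hasSum_main hφ hh ht).tsum_eq
    have hIeq : (∫ u in Ioi (0:ℝ), ((Real.exp (-(t*u)) : ℝ) : ℂ) * (u:ℂ) * φ u)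
        = ∫ u in Ioi (0:ℝ), Complex.exp (-(t * u : ℝ)) * (u:ℂ) * φ u := by
      refine setIntegral_congr_fun measurableSet_Ioi fun u hu => ?_
      rw [Complex.ofReal_exp, Complex.ofReal_neg, Complex.ofReal_mul]
    refine ⟨?_, ?_⟩
    · rw [HS, HD, hIeq]; ring
    · rw [HD, hIeq]; ring
end

section
/- Let φ ∈ 𝒟(ℒ), f = ℒ(φ), and h > 0. Then the Newton series (E^h f)(t) = Σ_{n=0}^∞ binom(h,n) (Δ^n f)(t) converges absolutely and locally uniformly on (0,∞), and for every t > 0 one has (E^h f)(t) = f(t+h) = ∫₀^∞ e^{−(t+h)u} φ(u) du. -/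
open MeasureTheory Filter Set

noncomputable section AuxStmt3


lemma gbinom_succ (h : ℝ) (n : ℕ) :
    gbinom h (n + 1) = gbinom h n * ((h - n) / (n + 1)) := by
  unfold gbinom
  rw [Finset.prod_range_succ, Nat.factorial_succ]
  push_cast
  rw [div_mul_div_comm, mul_comm (↑n + 1 : ℝ)]

lemma gbinom_mul (h : ℝ) (n : ℕ) :
    ((n : ℝ) + 1) * gbinom h (n + 1) = (h - n) * gbinom h n := by
  have h2 : ((n : ℝ) + 1) ≠ 0 := by positivity
  rw [gbinom_succ]
  field_simp

lemma gbinom_abs_summable {h : ℝ} (hh : 0 < h) : Summable (fun n => |gbinom h n|) := by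
  set N := ⌈h⌉₊ with hN
  rw [← summable_nat_add_iff N]
  have key : ∀ k : ℕ, h * |gbinom h (k + N)|
      = ((k + N : ℕ) : ℝ) * |gbinom h (k + N)|
        - (((k+1) + N : ℕ) : ℝ) * |gbinom h ((k+1) + N)| := by
    intro k
    have hn : h ≤ ((k + N : ℕ) : ℝ) := by
      calc h ≤ (N : ℝ) := Nat.le_ceil h
      _ ≤ ((k + N : ℕ) : ℝ) := by exact_mod_cast Nat.le_add_left N k
    have e1 : (((k+1) + N : ℕ) : ℝ) * |gbinom h ((k+1) + N)|
        = |(((k + N : ℕ) : ℝ) + 1) * gbinom h ((k + N) + 1)| := by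
      rw [show (k+1) + N = (k + N) + 1 by omega, abs_mul,
        abs_of_nonneg (show (0:ℝ) ≤ ((k + N : ℕ) : ℝ) + 1 by positivity)]
      push_cast; ring
    rw [e1, gbinom_mul, abs_mul, abs_of_nonpos (show h - ((k + N : ℕ):ℝ) ≤ 0 by linarith)]
    ring
  have hsum : Summable (fun k => h * |gbinom h (k + N)|) := by
    apply summable_of_sum_range_le (c := ((N : ℕ) : ℝ) * |gbinom h N|)
    · intro n; positivity
    · intro n
      have tel := Finset.sum_range_sub' (f := fun k => ((k + N : ℕ) : ℝ) * |gbinom h (k + N)|) n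
      calc ∑ i ∈ Finset.range n, h * |gbinom h (i + N)|
          = ∑ i ∈ Finset.range n, ((((i + N : ℕ)) : ℝ) * |gbinom h (i + N)|
              - (((i+1) + N : ℕ) : ℝ) * |gbinom h ((i+1) + N)|) :=
            Finset.sum_congr rfl fun i _ => key i
        _ = ((0 + N : ℕ) : ℝ) * |gbinom h (0 + N)|
              - ((n + N : ℕ) : ℝ) * |gbinom h (n + N)| := tel
        _ ≤ ((N : ℕ) : ℝ) * |gbinom h N| := by
            simp only [Nat.zero_add]
            have : (0:ℝ) ≤ ((n + N : ℕ) : ℝ) * |gbinom h (n + N)| := by positivity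
            linarith
  exact (summable_mul_left_iff hh.ne').mp hsum

lemma gbinom_le_tsum {h : ℝ} (hh : 0 < h) (n : ℕ) :
    |gbinom h n| ≤ ∑' m, |gbinom h m| :=
  Summable.le_tsum (gbinom_abs_summable hh) n (fun _ _ => abs_nonneg _)

lemma summable_aux (C : ℝ) {r : ℝ} (hr0 : 0 ≤ r) (hr1 : r < 1) :
    Summable (fun n : ℕ => C * (((n:ℝ) + 1) * r ^ n)) := by
  apply Summable.mul_left
  have h1 : Summable (fun n : ℕ => (n : ℝ) ^ 1 * r ^ n) :=
    summable_pow_mul_geometric_of_norm_lt_one 1 (by rwa [Real.norm_eq_abs, abs_of_nonneg hr0])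
  have h2 : Summable (fun n : ℕ => r ^ n) := summable_geometric_of_lt_one hr0 hr1
  simpa [add_mul, pow_one] using h1.add h2

section Binomial
variable {h : ℝ}

lemma deriv_term_bound (hh : 0 < h) {r : ℝ} (hr0 : 0 < r) (n : ℕ) {y : ℝ} (hy : |y| ≤ r) :
    |gbinom h n * (n * y ^ (n-1))|
      ≤ ((∑' m, |gbinom h m|)/r) * (((n:ℝ) + 1) * r ^ n) := by
  set C := ∑' m, |gbinom h m| with hC
  have hC0 : 0 ≤ C := le_trans (abs_nonneg _) (gbinom_le_tsum hh 0)
  have hy0 : (0:ℝ) ≤ |y| := abs_nonneg _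
  match n with
  | 0 => simp; positivity
  | (n+1) =>
    have h1 : |gbinom h (n+1) * (((n:ℝ)+1) * y ^ n)| ≤ C * (((n:ℝ)+1) * r ^ n) := by
      rw [abs_mul, abs_mul, abs_pow, abs_of_nonneg (show (0:ℝ) ≤ (n:ℝ)+1 by positivity)]
      apply mul_le_mul (gbinom_le_tsum hh (n+1)) ?_ (by positivity) hC0
      exact mul_le_mul_of_nonneg_left (pow_le_pow_left₀ hy0 hy n) (by positivity)
    have h2 : C * (((n:ℝ)+1) * r ^ n) ≤ (C/r) * (((n:ℝ)+1+1) * r ^ (n+1)) := by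
      have he : (C/r) * (((n:ℝ)+1+1) * r ^ (n+1)) = C * (((n:ℝ)+1+1) * r ^ n) := by
        rw [pow_succ]; field_simp
      rw [he]
      nlinarith [pow_nonneg hr0.le n, mul_nonneg hC0 (pow_nonneg hr0.le n)]
    have := le_trans h1 h2
    push_cast
    simpa using this

lemma s0_summable (hh : 0 < h) {x : ℝ} (hx : |x| < 1) :
    Summable (fun n => gbinom h n * x ^ n) := by
  apply Summable.of_norm_bounded (summable_aux (∑' m, |gbinom h m|) (abs_nonneg x) hx)
  intro n
  rw [norm_mul, norm_pow, Real.norm_eq_abs, Real.norm_eq_abs]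
  have h1 := gbinom_le_tsum hh n
  have hC0 : 0 ≤ ∑' m, |gbinom h m| := le_trans (abs_nonneg _) (gbinom_le_tsum hh 0)
  have h2 : |x| ^ n ≤ ((n:ℝ)+1) * |x| ^ n := by
    nlinarith [pow_nonneg (abs_nonneg x) n, Nat.cast_nonneg (α := ℝ) n]
  calc |gbinom h n| * |x| ^ n ≤ (∑' m, |gbinom h m|) * (((n:ℝ)+1) * |x| ^ n) :=
        mul_le_mul h1 h2 (by positivity) hC0
    _ = _ := rfl

lemma s1_summable (hh : 0 < h) {x : ℝ} (hx : |x| < 1) :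
    Summable (fun n : ℕ => gbinom h n * (n * x ^ (n-1))) := by
  set r : ℝ := (|x| + 1) / 2 with hr
  have hxr : |x| ≤ r := by rw [hr]; linarith
  have hr0 : 0 < r := by rw [hr]; positivity
  have hr1 : r < 1 := by rw [hr]; linarith
  apply Summable.of_norm_bounded (summable_aux ((∑' m, |gbinom h m|)/r) hr0.le hr1)
  intro n
  rw [Real.norm_eq_abs]
  exact deriv_term_bound hh hr0 n hxr

lemma s2_summable (hh : 0 < h) {x : ℝ} (hx : |x| < 1) :
    Summable (fun n : ℕ => (h - n) * gbinom h n * x ^ n) := by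
  apply Summable.of_norm_bounded
    (summable_aux ((|h|+1) * (∑' m, |gbinom h m|)) (abs_nonneg x) hx)
  intro n
  rw [Real.norm_eq_abs, abs_mul, abs_mul, abs_pow]
  have h1 := gbinom_le_tsum hh n
  have hC0 : 0 ≤ ∑' m, |gbinom h m| := le_trans (abs_nonneg _) (gbinom_le_tsum hh 0)
  have h2 : |h - n| ≤ (|h|+1) * ((n:ℝ)+1) := by
    have h3 : |h - (n:ℝ)| ≤ |h| + (n:ℝ) := by
      have := abs_add_le h (-(n:ℝ))
      simpa [sub_eq_add_neg, abs_of_nonneg (Nat.cast_nonneg (α := ℝ) n)] using this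
    nlinarith [abs_nonneg h, Nat.cast_nonneg (α := ℝ) n]
  calc |h - n| * |gbinom h n| * |x| ^ n
      ≤ ((|h|+1) * ((n:ℝ)+1)) * ((∑' m, |gbinom h m|) * |x| ^ n) := by
        rw [mul_assoc]
        apply mul_le_mul h2 ?_ (by positivity) (by positivity)
        exact mul_le_mul_of_nonneg_right h1 (by positivity)
    _ = ((|h|+1) * (∑' m, |gbinom h m|)) * (((n:ℝ)+1) * |x| ^ n) := by ring

lemma s3_summable (hh : 0 < h) {x : ℝ} (hx : |x| < 1) :
    Summable (fun n : ℕ => (n:ℝ) * gbinom h n * x ^ n) := by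
  apply Summable.of_norm_bounded (summable_aux (∑' m, |gbinom h m|) (abs_nonneg x) hx)
  intro n
  rw [Real.norm_eq_abs, abs_mul, abs_mul, abs_pow, abs_of_nonneg (Nat.cast_nonneg (α := ℝ) n)]
  have h1 := gbinom_le_tsum hh n
  have hC0 : 0 ≤ ∑' m, |gbinom h m| := le_trans (abs_nonneg _) (gbinom_le_tsum hh 0)
  calc (n:ℝ) * |gbinom h n| * |x| ^ n
      ≤ ((n:ℝ)+1) * ((∑' m, |gbinom h m|) * |x| ^ n) := by
        rw [mul_assoc]
        apply mul_le_mul (by linarith) ?_ (by positivity) (by positivity)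
        exact mul_le_mul_of_nonneg_right h1 (by positivity)
    _ = (∑' m, |gbinom h m|) * (((n:ℝ)+1) * |x| ^ n) := by ring

lemma hasDerivAt_binomSum (hh : 0 < h) {x : ℝ} (hx : x ∈ Ioo (-1:ℝ) 1) :
    HasDerivAt (fun y : ℝ => ∑' n, gbinom h n * y ^ n)
      (∑' n : ℕ, gbinom h n * (n * x ^ (n - 1))) x := by
  have hx1 : |x| < 1 := abs_lt.mpr ⟨hx.1, hx.2⟩
  set r : ℝ := (|x| + 1) / 2 with hr
  have hxr : |x| < r := by rw [hr]; linarith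
  have hr0 : 0 < r := by rw [hr]; positivity
  have hr1 : r < 1 := by rw [hr]; linarith
  apply hasDerivAt_tsum_of_isPreconnected
    (u := fun n : ℕ => ((∑' m, |gbinom h m|)/r) * (((n:ℝ)+1) * r ^ n))
    (summable_aux _ hr0.le hr1)
    (isOpen_Ioo (a := -r) (b := r)) (convex_Ioo _ _).isPreconnected
    (fun n y _ => (hasDerivAt_pow n y).const_mul (gbinom h n))
    (fun n y hy => by
      rw [Real.norm_eq_abs]
      exact deriv_term_bound hh hr0 n
        (le_of_lt (abs_lt.mpr ⟨(Set.mem_Ioo.mp hy).1, (Set.mem_Ioo.mp hy).2⟩)))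
    (y₀ := 0) (Set.mem_Ioo.mpr ⟨by linarith, by linarith⟩) ?_
    (Set.mem_Ioo.mpr ⟨(abs_lt.mp hxr).1, (abs_lt.mp hxr).2⟩)
  apply summable_of_ne_finset_zero (s := {0})
  intro n hn
  simp only [Finset.mem_singleton] at hn
  simp [zero_pow hn]

lemma binom_ode (hh : 0 < h) {x : ℝ} (hx : x ∈ Ioo (-1:ℝ) 1) :
    (1 + x) * (∑' n : ℕ, gbinom h n * (n * x ^ (n-1)))
      = h * ∑' n, gbinom h n * x ^ n := by
  have hx1 : |x| < 1 := abs_lt.mpr ⟨hx.1, hx.2⟩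
  have s1 := s1_summable hh hx1
  have step1 : (∑' n : ℕ, gbinom h n * (n * x ^ (n-1)))
      = ∑' n : ℕ, (h - n) * gbinom h n * x ^ n := by
    rw [Summable.tsum_eq_zero_add s1]
    simp only [Nat.cast_zero, zero_mul, mul_zero, zero_add]
    apply tsum_congr
    intro n
    have : gbinom h (n+1) * (((n:ℕ)+1 : ℕ) * x ^ ((n+1)-1))
        = (((n:ℝ)+1) * gbinom h (n+1)) * x ^ n := by push_cast; ring
    rw [this, gbinom_mul]
  have step2 : x * (∑' n : ℕ, gbinom h n * (n * x ^ (n-1)))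
      = ∑' n : ℕ, (n:ℝ) * gbinom h n * x ^ n := by
    rw [← tsum_mul_left]
    apply tsum_congr
    intro n
    match n with
    | 0 => simp
    | (m+1) =>
      push_cast
      rw [pow_succ]
      ring
  have expand : (1 + x) * (∑' n : ℕ, gbinom h n * (n * x ^ (n-1)))
      = (∑' n : ℕ, gbinom h n * (n * x ^ (n-1)))
        + x * (∑' n : ℕ, gbinom h n * (n * x ^ (n-1))) := by ring
  rw [expand, step2, step1, ← Summable.tsum_add (s2_summable hh hx1) (s3_summable hh hx1)]
  rw [← tsum_mul_left]
  apply tsum_congr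
  intro n
  ring

lemma hasSum_gbinom (hh : 0 < h) {x : ℝ} (hx : x ∈ Ioo (-1:ℝ) 1) :
    HasSum (fun n => gbinom h n * x ^ n) ((1 + x) ^ h) := by
  have hx1 : |x| < 1 := abs_lt.mpr ⟨hx.1, hx.2⟩
  set S : ℝ → ℝ := fun y => ∑' n, gbinom h n * y ^ n with hSdef
  have hF : ∀ y ∈ Ioo (-1:ℝ) 1, HasDerivAt (fun z => S z * (1 + z) ^ (-h)) 0 y := by
    intro y hy
    have hy1 : (0:ℝ) < 1 + y := by linarith [hy.1]
    have hd1 := hasDerivAt_binomSum hh hy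
    have hd2 : HasDerivAt (fun z : ℝ => (1 + z) ^ (-h)) (-h * (1 + y) ^ (-h - 1)) y := by
      have := (Real.hasDerivAt_rpow_const (x := 1 + y) (p := -h)
        (Or.inl hy1.ne')).comp y ((hasDerivAt_id y).const_add 1)
      simpa [Function.comp_def] using this
    have hmul := hd1.mul hd2
    convert hmul using 1
    · rfl
    · rfl
    · rfl
    have key := binom_ode hh hy
    have hrw : (1 + y : ℝ) ^ (-h) = (1 + y) * (1 + y) ^ (-h - 1) := by
      have h2 := Real.rpow_add hy1 1 (-h - 1)
      rw [Real.rpow_one] at h2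
      rw [← h2]
      congr 1
      ring
    rw [hrw]
    linear_combination (-(1 + y : ℝ) ^ (-h - 1)) * key
  have hzero : ∀ z ∈ Ioo (-1:ℝ) 1,
      fderivWithin ℝ (fun z => S z * (1 + z) ^ (-h)) (Ioo (-1:ℝ) 1) z = 0 := by
    intro z hz
    rw [fderivWithin_of_isOpen isOpen_Ioo hz, (hF z hz).hasFDerivAt.fderiv]
    refine ContinuousLinearMap.ext fun w => ?_
    simp
  have hconst : S x * (1 + x) ^ (-h) = S 0 * (1 + 0) ^ (-h) := by
    exact Convex.is_const_of_fderivWithin_eq_zero (convex_Ioo (-1:ℝ) 1)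
      (fun z hz => (hF z hz).differentiableAt.differentiableWithinAt)
      hzero hx (by norm_num)
  have hS0 : S 0 = 1 := by
    have he : S 0 = ∑' n, gbinom h n * (0:ℝ) ^ n := rfl
    rw [he, tsum_eq_single 0 (fun n hn => by simp [zero_pow hn])]
    simp [gbinom]
  rw [hS0, one_mul] at hconst
  have h10 : ((1:ℝ) + 0) ^ (-h) = 1 := by norm_num
  rw [h10] at hconst
  have hx1' : (0:ℝ) < 1 + x := by linarith [hx.1]
  have hpos : (0:ℝ) < (1 + x) ^ h := Real.rpow_pos_of_pos hx1' h
  have hSx : S x = (1 + x) ^ h := by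
    rw [Real.rpow_neg hx1'.le] at hconst
    field_simp at hconst
    linarith
  exact (s0_summable hh hx1).hasSum_iff.mpr hSx
end Binomial


noncomputable section LapPart

def kk (u : ℝ) : ℝ := Real.exp (-u) - 1
def EE (φ : ℝ → ℂ) (t u : ℝ) : ℂ := Complex.exp (-(t * u : ℝ)) * φ u
def GG (φ : ℝ → ℂ) (n : ℕ) (t : ℝ) : ℂ := ∫ u in Ioi (0:ℝ), (kk u : ℂ) ^ n * EE φ t u
def MM (φ : ℝ → ℂ) (t : ℝ) : ℝ := ∫ u in Ioi (0:ℝ), Real.exp (-(t * u)) * ‖φ u‖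

variable {φ : ℝ → ℂ} {h t : ℝ}

lemma kk_mem {u : ℝ} (hu : 0 < u) : kk u ∈ Ioo (-1:ℝ) 0 := by
  have h1 := Real.exp_pos (-u)
  have h2 : Real.exp (-u) < 1 := Real.exp_lt_one_iff.mpr (by linarith)
  exact ⟨by simp only [kk]; linarith, by simp only [kk]; linarith⟩

lemma abs_kk_le {u : ℝ} (hu : 0 < u) : |kk u| ≤ 1 := by
  have h1 := kk_mem hu
  rw [abs_le]
  exact ⟨h1.1.le, by linarith [h1.2]⟩

lemma norm_EE (t u : ℝ) : ‖EE φ t u‖ = Real.exp (-(t * u)) * ‖φ u‖ := by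
  rw [EE, norm_mul, Complex.norm_exp]
  simp

lemma norm_term_le (t : ℝ) {u : ℝ} (hu : 0 < u) (n : ℕ) :
    ‖(kk u : ℂ) ^ n * EE φ t u‖ ≤ Real.exp (-(t * u)) * ‖φ u‖ := by
  rw [norm_mul, norm_pow, Complex.norm_real, Real.norm_eq_abs, norm_EE]
  have h1 : |kk u| ^ n ≤ 1 := pow_le_one₀ (abs_nonneg _) (abs_kk_le hu)
  have h2 : (0:ℝ) ≤ Real.exp (-(t * u)) * ‖φ u‖ := by positivity
  nlinarith

lemma meas_term (hφ : Measurable φ) (t : ℝ) (n : ℕ) :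
    Measurable (fun u => (kk u : ℂ) ^ n * EE φ t u) := by
  unfold EE kk
  fun_prop

lemma integrable_term (hφ : MemDL φ) (ht : 0 < t) (n : ℕ) :
    IntegrableOn (fun u => (kk u : ℂ) ^ n * EE φ t u) (Ioi 0) := by
  apply Integrable.mono' (hφ.2.2 t ht)
  · exact (meas_term hφ.1 t n).aestronglyMeasurable
  · filter_upwards [ae_restrict_mem measurableSet_Ioi] with u hu
    exact norm_term_le t hu n

lemma norm_GG_le (hφ : MemDL φ) (ht : 0 < t) (n : ℕ) : ‖GG φ n t‖ ≤ MM φ t := by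
  apply norm_integral_le_of_norm_le (hφ.2.2 t ht)
  filter_upwards [ae_restrict_mem measurableSet_Ioi] with u hu
  exact norm_term_le t hu n

lemma MM_mono (hφ : MemDL φ) {t₀ : ℝ} (h0 : 0 < t₀) (hle : t₀ ≤ t) : MM φ t ≤ MM φ t₀ := by
  apply setIntegral_mono_on (hφ.2.2 t (lt_of_lt_of_le h0 hle)) (hφ.2.2 t₀ h0) measurableSet_Ioi
  intro u hu
  have hu' : (0:ℝ) < u := hu
  have he : Real.exp (-(t * u)) ≤ Real.exp (-(t₀ * u)) := Real.exp_le_exp.mpr (by nlinarith)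
  exact mul_le_mul_of_nonneg_right he (norm_nonneg _)

lemma ptwise (t u : ℝ) (n : ℕ) :
    (kk u : ℂ) ^ n * EE φ (t + 1) u - (kk u : ℂ) ^ n * EE φ t u
      = (kk u : ℂ) ^ (n + 1) * EE φ t u := by
  have h1 : Complex.exp (-((t + 1) * u : ℝ))
      = Complex.exp (-(t * u : ℝ)) * Complex.exp ((-u : ℝ) : ℂ) := by
    rw [← Complex.exp_add]
    congr 1
    push_cast
    ring
  have h2 : (kk u : ℂ) = Complex.exp ((-u : ℝ) : ℂ) - 1 := by
    simp only [kk]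
    push_cast [Complex.ofReal_exp]
    ring
  rw [EE, EE, h1, h2, pow_succ]
  ring

lemma iter_eq (hφ : MemDL φ) (n : ℕ) :
    ∀ t : ℝ, 0 < t → (Dh 1)^[n] (Lap φ) t = GG φ n t := by
  induction n with
  | zero =>
    intro t ht
    simp only [Function.iterate_zero, id_eq, GG, pow_zero, one_mul]
    rfl
  | succ n ih =>
    intro t ht
    rw [Function.iterate_succ_apply']
    have h1 : (0:ℝ) < t + 1 := by linarith
    show (Dh 1)^[n] (Lap φ) (t + 1) - (Dh 1)^[n] (Lap φ) t = GG φ (n + 1) t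
    rw [ih (t + 1) h1, ih t ht, GG, GG,
      ← integral_sub (integrable_term hφ h1 n) (integrable_term hφ ht n)]
    show _ = GG φ (n+1) t
    rw [GG]
    apply setIntegral_congr_fun measurableSet_Ioi
    intro u _
    exact ptwise t u n

lemma norm_NTerm (hφ : MemDL φ) (ht : 0 < t) (n : ℕ) :
    ‖NTerm h (Lap φ) n t‖ ≤ |gbinom h n| * MM φ t := by
  rw [NTerm, iter_eq hφ n t ht, norm_mul, Complex.norm_real, Real.norm_eq_abs]
  exact mul_le_mul_of_nonneg_left (norm_GG_le hφ ht n) (abs_nonneg _)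

lemma hasSum_main (hφ : MemDL φ) (hh : 0 < h) (ht : 0 < t) :
    HasSum (fun n => NTerm h (Lap φ) n t)
      (∫ u in Ioi (0:ℝ), Complex.exp (-((t + h) * u : ℝ)) * φ u) := by
  set F : ℕ → ℝ → ℂ := fun n u => (gbinom h n : ℂ) * ((kk u : ℂ) ^ n * EE φ t u) with hF
  have hint : ∀ n, Integrable (F n) (volume.restrict (Ioi 0)) :=
    fun n => (integrable_term hφ ht n).const_mul _
  have hnorm : ∀ n, (∫ u in Ioi (0:ℝ), ‖F n u‖) ≤ |gbinom h n| * MM φ t := by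
    intro n
    have e : ∀ u, ‖F n u‖ = |gbinom h n| * ‖(kk u : ℂ) ^ n * EE φ t u‖ := by
      intro u
      rw [hF]
      simp only [norm_mul, Complex.norm_real, Real.norm_eq_abs]
    calc (∫ u in Ioi (0:ℝ), ‖F n u‖)
        = |gbinom h n| * ∫ u in Ioi (0:ℝ), ‖(kk u : ℂ) ^ n * EE φ t u‖ := by
          simp_rw [e]
          exact integral_const_mul _ _
      _ ≤ |gbinom h n| * MM φ t := by
          apply mul_le_mul_of_nonneg_left ?_ (abs_nonneg _)
          apply setIntegral_mono_on (integrable_term hφ ht n).norm (hφ.2.2 t ht)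
            measurableSet_Ioi
          intro u hu
          exact norm_term_le t hu n
  have hsum : Summable (fun n => ∫ u in Ioi (0:ℝ), ‖F n u‖) :=
    Summable.of_nonneg_of_le (fun n => integral_nonneg (fun u => norm_nonneg _)) hnorm
      ((gbinom_abs_summable hh).mul_right (MM φ t))
  have key := MeasureTheory.hasSum_integral_of_summable_integral_norm hint hsum
  have hl : (fun n => ∫ u in Ioi (0:ℝ), F n u) = fun n => NTerm h (Lap φ) n t := by
    funext n
    rw [hF]
    rw [integral_const_mul, NTerm, iter_eq hφ n t ht, GG]
  have hr : (∫ u in Ioi (0:ℝ), (∑' n, F n u))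
      = ∫ u in Ioi (0:ℝ), Complex.exp (-((t + h) * u : ℝ)) * φ u := by
    apply setIntegral_congr_fun measurableSet_Ioi
    intro u hu
    show (∑' n, F n u) = Complex.exp (-((t + h) * u : ℝ)) * φ u
    have hu' : (0:ℝ) < u := hu
    have hmem : kk u ∈ Ioo (-1:ℝ) 1 := ⟨(kk_mem hu').1, lt_trans (kk_mem hu').2 one_pos⟩
    have hbin := hasSum_gbinom hh hmem
    have hbinC : HasSum (fun n => ((gbinom h n : ℂ) * (kk u : ℂ) ^ n))
        ((((1 + kk u : ℝ) ^ h : ℝ)) : ℂ) := by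
      have := hbin.mapL Complex.ofRealCLM
      simpa using this
    have htsum : (∑' n, F n u) = ((((1 + kk u : ℝ) ^ h : ℝ)) : ℂ) * EE φ t u := by
      rw [hF]
      calc ∑' n, (gbinom h n : ℂ) * ((kk u : ℂ) ^ n * EE φ t u)
          = ∑' n, ((gbinom h n : ℂ) * (kk u : ℂ) ^ n) * EE φ t u :=
            tsum_congr fun n => by ring
        _ = (∑' n, (gbinom h n : ℂ) * (kk u : ℂ) ^ n) * EE φ t u := tsum_mul_right
        _ = _ := by rw [hbinC.tsum_eq]
    rw [htsum]
    have h1 : (1 + kk u : ℝ) = Real.exp (-u) := by simp [kk]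
    have h2 : (Real.exp (-u)) ^ h = Real.exp (-u * h) := (Real.exp_mul (-u) h).symm
    rw [h1, h2, EE, Complex.ofReal_exp, ← mul_assoc, ← Complex.exp_add]
    congr 2
    push_cast
    ring
  rw [hl, hr] at key
  exact key

end LapPart
end AuxStmt3

/-- for `φ ∈ 𝒟(ℒ)`, `f = ℒ(φ)`, `h > 0`, the Newton series
`(E^h f)(t) = Σ_{n≥0} binom(h,n) (Δ^n f)(t)` converges absolutely and locally uniformly on
`(0,∞)` and `(E^h f)(t) = f(t+h) = ∫₀^∞ e^{−(t+h)u} φ(u) du` for every `t > 0`. -/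
theorem stmt3 (φ : ℝ → ℂ) (hφ : MemDL φ) (h : ℝ) (hh : 0 < h) :
    ALUOn (NTerm h (Lap φ)) (Ioi 0) ∧
    ∀ t ∈ Ioi (0:ℝ),
      Nop h (Lap φ) t = Lap φ (t + h) ∧
      Nop h (Lap φ) t = ∫ u in Ioi (0:ℝ), Complex.exp (-((t + h) * u : ℝ)) * φ u := by
  constructor
  · constructor
    · intro t ht
      have ht' : (0:ℝ) < t := ht
      exact Summable.of_nonneg_of_le (fun n => norm_nonneg _)
        (fun n => norm_NTerm hφ ht' n) ((gbinom_abs_summable hh).mul_right (MM φ t))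
    · rw [tendstoLocallyUniformlyOn_iff_forall_isCompact isOpen_Ioi]
      intro K hK hKc
      rcases K.eq_empty_or_nonempty with rfl | hne
      · exact tendstoUniformlyOn_empty
      · obtain ⟨t₀, ht₀K, ht₀le⟩ := hKc.exists_isLeast hne
        have ht₀ : (0:ℝ) < t₀ := hK ht₀K
        apply tendstoUniformlyOn_tsum_nat ((gbinom_abs_summable hh).mul_right (MM φ t₀))
        intro n t htK
        have htpos : (0:ℝ) < t := lt_of_lt_of_le ht₀ (ht₀le htK)
        calc ‖NTerm h (Lap φ) n t‖ ≤ |gbinom h n| * MM φ t := norm_NTerm hφ htpos n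
          _ ≤ |gbinom h n| * MM φ t₀ :=
            mul_le_mul_of_nonneg_left (MM_mono hφ ht₀ (ht₀le htK)) (abs_nonneg _)
  · intro t ht
    have key := hasSum_main hφ hh (show (0:ℝ) < t from ht)
    have h1 : Nop h (Lap φ) t
        = ∫ u in Ioi (0:ℝ), Complex.exp (-((t + h) * u : ℝ)) * φ u := key.tsum_eq
    exact ⟨h1, h1⟩
end

section
/- Let φ ∈ 𝒟(ℒ), f = ℒ(φ), and let m ≥ 1 be an integer. Then for every t > 0 the Bernoulli series defining (B f)(t) and (B_m f)(t+i), 0 ≤ i ≤ m−1, converge absolutely and locally uniformly, and (B f)(t) = (1/m) Σ_{i=0}^{m−1} (B_m f)(t+i). -/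
open MeasureTheory Filter Set

noncomputable section Aux4

open Real in
/-- The kernel of the `n`-th Bernoulli term. -/
def bker (h : ℝ) (n : ℕ) (u : ℝ) : ℝ := (1 - Real.exp (-(h*u)))^n / (n+1)

/-- The limit kernel. -/
def Lker (h u : ℝ) : ℝ := h * u / (1 - Real.exp (-(h*u)))

lemma exp_neg_lt_one {h u : ℝ} (hh : 0 < h) (hu : 0 < u) : Real.exp (-(h*u)) < 1 :=
  Real.exp_lt_one_iff.mpr (by nlinarith)

lemma ker_nonneg {h u : ℝ} (hh : 0 < h) (hu : 0 < u) (n : ℕ) : 0 ≤ bker h n u := by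
  have := exp_neg_lt_one hh hu
  have : (0:ℝ) ≤ 1 - Real.exp (-(h*u)) := by linarith
  unfold bker; positivity

lemma ker_le_one {h u : ℝ} (hh : 0 < h) (hu : 0 < u) (n : ℕ) : bker h n u ≤ 1 := by
  have h1 := exp_neg_lt_one hh hu
  have h2 := Real.exp_pos (-(h*u))
  unfold bker
  have hx : (1 - Real.exp (-(h*u)))^n ≤ 1 := by
    apply pow_le_one₀ (by linarith) (by linarith)
  have hn : (0:ℝ) ≤ (n:ℝ) := Nat.cast_nonneg n
  rw [div_le_one (by positivity)]
  linarith

lemma hasSum_ker {h u : ℝ} (hh : 0 < h) (hu : 0 < u) :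
    HasSum (fun n => bker h n u) (Lker h u) := by
  set x : ℝ := 1 - Real.exp (-(h*u)) with hxdef
  have h1 := exp_neg_lt_one hh hu
  have h2 := Real.exp_pos (-(h*u))
  have hx0 : 0 < x := by simp only [hxdef]; linarith
  have hx1 : x < 1 := by simp only [hxdef]; linarith
  have H := (Real.hasSum_pow_div_log_of_abs_lt_one
    (by rw [abs_of_pos hx0]; exact hx1)).div_const x
  have hlog : 1 - x = Real.exp (-(h*u)) := by simp [hxdef]
  have hL : -Real.log (1 - x) / x = Lker h u := by
    rw [hlog, Real.log_exp]; simp [Lker, hxdef]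
  rw [hL] at H
  convert H using 2 with n
  · rfl
  unfold bker
  rw [← hxdef]
  rw [pow_succ]
  field_simp

lemma Lker_nonneg {h u : ℝ} (hh : 0 < h) (hu : 0 < u) : 0 ≤ Lker h u := by
  have h1 := exp_neg_lt_one hh hu
  unfold Lker
  apply div_nonneg (by positivity) (by linarith)

lemma Lker_le {h u : ℝ} (hh : 0 < h) (hu : 0 < u) : Lker h u ≤ 1 + h * u := by
  have h1 := exp_neg_lt_one hh hu
  have h2 : h * u + 1 ≤ Real.exp (h*u) := Real.add_one_le_exp _
  have h3 : Real.exp (-(h*u)) = (Real.exp (h*u))⁻¹ := Real.exp_neg _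
  have hE : 0 < Real.exp (h*u) := Real.exp_pos _
  have key : (1 + h*u) * (Real.exp (h*u))⁻¹ ≤ 1 := by
    rw [← div_eq_mul_inv, div_le_one hE]; linarith
  unfold Lker
  rw [div_le_iff₀ (by linarith), h3]
  nlinarith [key]

end Aux4

noncomputable section Aux4b
open MeasureTheory Filter Set

lemma u_exp_le {t u : ℝ} (ht : 0 < t) (hu : 0 ≤ u) :
    u * Real.exp (-(t*u)) ≤ (2/t) * Real.exp (-(t/2*u)) := by
  have h1 : t/2*u ≤ Real.exp (t/2*u) := by
    have := Real.add_one_le_exp (t/2*u); linarith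
  have h2 : u ≤ (2/t) * Real.exp (t/2*u) := by
    have h' := mul_le_mul_of_nonneg_left h1 (by positivity : (0:ℝ) ≤ 2/t)
    calc u = (2/t)*(t/2*u) := by field_simp
      _ ≤ _ := h'
  have h3 : Real.exp (t/2*u) * Real.exp (-(t*u)) = Real.exp (-(t/2*u)) := by
    rw [← Real.exp_add]; ring_nf
  calc u * Real.exp (-(t*u)) ≤ (2/t) * Real.exp (t/2*u) * Real.exp (-(t*u)) := by
        apply mul_le_mul_of_nonneg_right h2 (Real.exp_pos _).le
    _ = (2/t) * Real.exp (-(t/2*u)) := by rw [mul_assoc, h3]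

lemma master_real {φ : ℝ → ℂ} (hφ : MemDL φ) {t A B : ℝ} (ht : 0 < t) (hA : 0 ≤ A)
    (hB : 0 ≤ B) {c : ℝ → ℝ} (hc : Measurable c)
    (hbd : ∀ u ∈ Ioi (0:ℝ), |c u| ≤ (A + B * u) * Real.exp (-(t * u))) :
    IntegrableOn (fun u => c u * ‖φ u‖) (Ioi 0) := by
  have h1 : IntegrableOn (fun u => Real.exp (-(t*u)) * ‖φ u‖) (Ioi 0) := hφ.2.2 t ht
  have h2 : IntegrableOn (fun u => Real.exp (-(t/2*u)) * ‖φ u‖) (Ioi 0) :=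
    hφ.2.2 (t/2) (by positivity)
  apply Integrable.mono' ((h1.const_mul A).add ((h2.const_mul (B * (2/t)))))
  · exact ((hc.mul hφ.1.norm).aestronglyMeasurable)
  · filter_upwards [ae_restrict_mem measurableSet_Ioi] with u hu
    have hu' : (0:ℝ) < u := hu
    have hb := hbd u hu
    have hn : (0:ℝ) ≤ ‖φ u‖ := norm_nonneg _
    have key : |c u| * ‖φ u‖ ≤ (A + B*u) * Real.exp (-(t*u)) * ‖φ u‖ :=
      mul_le_mul_of_nonneg_right hb hn
    have expand : (A + B*u) * Real.exp (-(t*u)) * ‖φ u‖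
        = A * (Real.exp (-(t*u)) * ‖φ u‖) + B * (u * Real.exp (-(t*u))) * ‖φ u‖ := by ring
    have hue := u_exp_le ht hu'.le
    have : B * (u * Real.exp (-(t*u))) * ‖φ u‖ ≤ B * (2/t) * (Real.exp (-(t/2*u)) * ‖φ u‖) := by
      have : B * (u * Real.exp (-(t*u))) ≤ B * ((2/t) * Real.exp (-(t/2*u))) :=
        mul_le_mul_of_nonneg_left hue hB
      nlinarith
    have hnorm : ‖c u * ‖φ u‖‖ = |c u| * ‖φ u‖ := by
      rw [Real.norm_eq_abs, abs_mul, abs_of_nonneg hn]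
    simp only [Pi.add_apply]
    rw [hnorm]
    calc |c u| * ‖φ u‖ ≤ (A + B*u) * Real.exp (-(t*u)) * ‖φ u‖ := key
      _ = A * (Real.exp (-(t*u)) * ‖φ u‖) + B * (u * Real.exp (-(t*u))) * ‖φ u‖ := expand
      _ ≤ A * (Real.exp (-(t*u)) * ‖φ u‖) + B * (2/t) * (Real.exp (-(t/2*u)) * ‖φ u‖) := by
          linarith

lemma master_complex {φ : ℝ → ℂ} (hφ : MemDL φ) {t A B : ℝ} (ht : 0 < t) (hA : 0 ≤ A)
    (hB : 0 ≤ B) {c : ℝ → ℝ} (hc : Measurable c)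
    (hbd : ∀ u ∈ Ioi (0:ℝ), |c u| ≤ (A + B * u) * Real.exp (-(t * u))) :
    IntegrableOn (fun u => (c u : ℂ) * φ u) (Ioi 0) := by
  have hbig : IntegrableOn (fun u => ((A + B * u) * Real.exp (-(t * u))) * ‖φ u‖) (Ioi 0) := by
    apply master_real hφ ht hA hB (by fun_prop)
    intro u hu
    have hu' : (0:ℝ) < u := hu
    rw [abs_of_nonneg]
    positivity
  apply Integrable.mono' hbig
  · exact ((Complex.measurable_ofReal.comp hc).mul hφ.1).aestronglyMeasurable
  · filter_upwards [ae_restrict_mem measurableSet_Ioi] with u hu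
    rw [norm_mul, Complex.norm_real, Real.norm_eq_abs]
    exact mul_le_mul_of_nonneg_right (hbd u hu) (norm_nonneg _)

end Aux4b

noncomputable section Aux4c
open MeasureTheory Filter Set

lemma iterDh {φ : ℝ → ℂ} (hφ : MemDL φ) {h : ℝ} (hh : 0 < h) (n : ℕ) :
    ∀ t : ℝ, 0 < t → (Dh h)^[n] (Lap φ) t =
      (-1:ℂ)^n * ∫ u in Ioi (0:ℝ),
        (((1 - Real.exp (-(h*u)))^n * Real.exp (-(t*u)) : ℝ) : ℂ) * φ u := by
  have hint : ∀ s : ℝ, 0 < s → ∀ k : ℕ, IntegrableOn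
      (fun u => (((1 - Real.exp (-(h*u)))^k * Real.exp (-(s*u)) : ℝ) : ℂ) * φ u) (Ioi 0) := by
    intro s hs k
    apply master_complex hφ hs (A := 1) (B := 0) zero_le_one le_rfl (by fun_prop)
    intro u hu
    have hu' : (0:ℝ) < u := hu
    have h1 := exp_neg_lt_one hh hu'
    have h2 := Real.exp_pos (-(h*u))
    rw [abs_mul, abs_of_nonneg (pow_nonneg (by linarith) _), abs_of_nonneg (Real.exp_pos _).le]
    have hp : (1 - Real.exp (-(h*u)))^k ≤ 1 := pow_le_one₀ (by linarith) (by linarith)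
    nlinarith [Real.exp_pos (-(s*u))]
  induction n with
  | zero =>
    intro t ht
    simp only [Function.iterate_zero, id_eq, pow_zero, one_mul]
    unfold Lap
    refine setIntegral_congr_fun measurableSet_Ioi fun u hu => ?_
    rw [Complex.ofReal_exp, Complex.ofReal_neg]
  | succ n ih =>
    intro t ht
    rw [Function.iterate_succ_apply']
    have key : Dh h ((Dh h)^[n] (Lap φ)) t
        = (Dh h)^[n] (Lap φ) (t+h) - (Dh h)^[n] (Lap φ) t := rfl
    rw [key, ih (t+h) (by linarith), ih t ht, ← mul_sub,
      ← integral_sub (hint (t+h) (by linarith) n) (hint t ht n)]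
    have hfun : (fun u => (((1-Real.exp (-(h*u)))^n * Real.exp (-((t+h)*u)) : ℝ):ℂ) * φ u
            - (((1-Real.exp (-(h*u)))^n * Real.exp (-(t*u)) : ℝ):ℂ) * φ u)
        = fun u => -((((1-Real.exp (-(h*u)))^(n+1) * Real.exp (-(t*u)) : ℝ):ℂ) * φ u) := by
      funext u
      have hr : (1-Real.exp (-(h*u)))^n * Real.exp (-((t+h)*u))
          - (1-Real.exp (-(h*u)))^n * Real.exp (-(t*u))
          = -((1-Real.exp (-(h*u)))^(n+1) * Real.exp (-(t*u))) := by
        have he : Real.exp (-((t+h)*u)) = Real.exp (-(t*u)) * Real.exp (-(h*u)) := by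
          rw [← Real.exp_add]; ring_nf
        rw [he, pow_succ]; ring
      rw [← sub_mul, ← Complex.ofReal_sub, hr, Complex.ofReal_neg, neg_mul]
    rw [hfun, integral_neg, pow_succ]
    ring

lemma BTerm_eq {φ : ℝ → ℂ} (hφ : MemDL φ) {h : ℝ} (hh : 0 < h) (n : ℕ) {t : ℝ} (ht : 0 < t) :
    BTerm h (Lap φ) n t
      = ∫ u in Ioi (0:ℝ), ((bker h n u * Real.exp (-(t*u)) : ℝ) : ℂ) * φ u := by
  unfold BTerm
  rw [iterDh hφ hh n t ht, ← mul_assoc]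
  have hpow : ((-1:ℂ)^n / (n+1)) * (-1)^n = 1/((n:ℂ)+1) := by
    rw [div_mul_eq_mul_div, ← mul_pow]; norm_num
  rw [hpow, ← integral_const_mul]
  refine setIntegral_congr_fun measurableSet_Ioi fun u hu => ?_
  unfold bker
  push_cast
  ring

/-- The dominating sequence. -/
def aB (φ : ℝ → ℂ) (h t : ℝ) (n : ℕ) : ℝ :=
  ∫ u in Ioi (0:ℝ), bker h n u * Real.exp (-(t*u)) * ‖φ u‖

lemma int_bker {φ : ℝ → ℂ} (hφ : MemDL φ) {h t : ℝ} (hh : 0 < h) (ht : 0 < t) (n : ℕ) :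
    IntegrableOn (fun u => bker h n u * Real.exp (-(t*u)) * ‖φ u‖) (Ioi 0) := by
  apply master_real hφ ht (A := 1) (B := 0) zero_le_one le_rfl
    (c := fun u => bker h n u * Real.exp (-(t*u))) (by unfold bker; fun_prop)
  intro u hu
  have hu' : (0:ℝ) < u := hu
  rw [abs_mul, abs_of_nonneg (ker_nonneg hh hu' n), abs_of_nonneg (Real.exp_pos _).le]
  nlinarith [ker_le_one hh hu' n, Real.exp_pos (-(t*u)), ker_nonneg hh hu' n]

lemma int_bkerC {φ : ℝ → ℂ} (hφ : MemDL φ) {h t : ℝ} (hh : 0 < h) (ht : 0 < t) (n : ℕ) :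
    IntegrableOn (fun u => ((bker h n u * Real.exp (-(t*u)) : ℝ):ℂ) * φ u) (Ioi 0) := by
  apply master_complex hφ ht (A := 1) (B := 0) zero_le_one le_rfl
    (c := fun u => bker h n u * Real.exp (-(t*u))) (by unfold bker; fun_prop)
  intro u hu
  have hu' : (0:ℝ) < u := hu
  rw [abs_mul, abs_of_nonneg (ker_nonneg hh hu' n), abs_of_nonneg (Real.exp_pos _).le]
  nlinarith [ker_le_one hh hu' n, Real.exp_pos (-(t*u)), ker_nonneg hh hu' n]

lemma norm_BTerm_le {φ : ℝ → ℂ} (hφ : MemDL φ) {h : ℝ} (hh : 0 < h) {t t' : ℝ} (ht : 0 < t)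
    (htt' : t ≤ t') (n : ℕ) : ‖BTerm h (Lap φ) n t'‖ ≤ aB φ h t n := by
  have ht' : 0 < t' := lt_of_lt_of_le ht htt'
  rw [BTerm_eq hφ hh n ht']
  refine (norm_integral_le_integral_norm _).trans ?_
  apply setIntegral_mono_on ((int_bkerC hφ hh ht' n).norm) (int_bker hφ hh ht n)
    measurableSet_Ioi
  intro u hu
  have hu' : (0:ℝ) < u := hu
  rw [norm_mul, Complex.norm_real, Real.norm_eq_abs, abs_mul,
    abs_of_nonneg (ker_nonneg hh hu' n), abs_of_nonneg (Real.exp_pos _).le]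
  have hexp : Real.exp (-(t'*u)) ≤ Real.exp (-(t*u)) := by
    apply Real.exp_le_exp.mpr; nlinarith
  exact mul_le_mul_of_nonneg_right
    (mul_le_mul_of_nonneg_left hexp (ker_nonneg hh hu' n)) (norm_nonneg _)

lemma summable_aB {φ : ℝ → ℂ} (hφ : MemDL φ) {h t : ℝ} (hh : 0 < h) (ht : 0 < t) :
    Summable (aB φ h t) := by
  have hC : IntegrableOn (fun u => (1 + h*u) * Real.exp (-(t*u)) * ‖φ u‖) (Ioi 0) := by
    apply master_real hφ ht (A := 1) (B := h) zero_le_one hh.le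
      (c := fun u => (1 + h*u) * Real.exp (-(t*u))) (by fun_prop)
    intro u hu
    have hu' : (0:ℝ) < u := hu
    rw [abs_of_nonneg (by positivity)]
  apply summable_of_sum_range_le
    (c := ∫ u in Ioi (0:ℝ), (1 + h*u) * Real.exp (-(t*u)) * ‖φ u‖)
  · intro n
    exact setIntegral_nonneg measurableSet_Ioi fun u hu =>
      mul_nonneg (mul_nonneg (ker_nonneg hh hu n) (Real.exp_pos _).le) (norm_nonneg _)
  · intro N
    unfold aB
    rw [← integral_finset_sum _ fun n _ => int_bker hφ hh ht n]
    apply setIntegral_mono_on (integrable_finset_sum _ fun n _ => int_bker hφ hh ht n) hC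
      measurableSet_Ioi
    intro u hu
    have hu' : (0:ℝ) < u := hu
    have hsum : ∑ n ∈ Finset.range N, bker h n u ≤ 1 + h*u := by
      refine le_trans (Summable.sum_le_tsum _ (fun n _ => ker_nonneg hh hu' n)
        (hasSum_ker hh hu').summable) ?_
      rw [(hasSum_ker hh hu').tsum_eq]
      exact Lker_le hh hu'
    calc ∑ n ∈ Finset.range N, bker h n u * Real.exp (-(t*u)) * ‖φ u‖
        = (∑ n ∈ Finset.range N, bker h n u) * (Real.exp (-(t*u)) * ‖φ u‖) := by
          rw [Finset.sum_mul]; exact Finset.sum_congr rfl fun n _ => by ring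
      _ ≤ (1 + h*u) * (Real.exp (-(t*u)) * ‖φ u‖) := by
          apply mul_le_mul_of_nonneg_right hsum (by positivity)
      _ = (1 + h*u) * Real.exp (-(t*u)) * ‖φ u‖ := by ring

lemma aluBTerm {φ : ℝ → ℂ} (hφ : MemDL φ) {h : ℝ} (hh : 0 < h) (i : ℝ) (hi : 0 ≤ i) :
    ALUOn (fun n t => BTerm h (Lap φ) n (t + i)) (Ioi 0) := by
  constructor
  · intro t ht
    have ht' : (0:ℝ) < t := ht
    exact Summable.of_nonneg_of_le (fun n => norm_nonneg _)
      (fun n => norm_BTerm_le hφ hh ht' (le_add_of_nonneg_right hi) n)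
      (summable_aB hφ hh ht')
  · rw [tendstoLocallyUniformlyOn_iff_forall_isCompact isOpen_Ioi]
    intro K hK hKc
    rcases K.eq_empty_or_nonempty with rfl | hne
    · exact tendstoUniformlyOn_empty
    · obtain ⟨t₀, ht₀K, ht₀le⟩ := hKc.exists_isLeast hne
      have ht₀ : (0:ℝ) < t₀ := hK ht₀K
      apply tendstoUniformlyOn_tsum_nat (summable_aB hφ hh ht₀)
      intro n t htK
      have h1 : t₀ ≤ t := ht₀le htK
      exact norm_BTerm_le hφ hh ht₀ (by linarith) n

end Aux4c

noncomputable section Aux4d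
open MeasureTheory Filter Set

lemma aB_nonneg {φ : ℝ → ℂ} {h t : ℝ} (hh : 0 < h) (n : ℕ) : 0 ≤ aB φ h t n :=
  setIntegral_nonneg measurableSet_Ioi fun u hu =>
    mul_nonneg (mul_nonneg (ker_nonneg hh hu n) (Real.exp_pos _).le) (norm_nonneg _)

lemma Bop_eq {φ : ℝ → ℂ} (hφ : MemDL φ) {h t : ℝ} (hh : 0 < h) (ht : 0 < t) :
    Bop h (Lap φ) t = ∫ u in Ioi (0:ℝ), ((Lker h u * Real.exp (-(t*u)) : ℝ):ℂ) * φ u := by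
  unfold Bop
  rw [tsum_congr (fun n => BTerm_eq hφ hh n ht)]
  have hmeas : ∀ n : ℕ, AEStronglyMeasurable
      (fun u => ((bker h n u * Real.exp (-(t*u)) : ℝ):ℂ) * φ u) (volume.restrict (Ioi 0)) :=
    fun n => ((Complex.measurable_ofReal.comp
      (by unfold bker; fun_prop : Measurable fun u => bker h n u * Real.exp (-(t*u)))).mul
      hφ.1).aestronglyMeasurable
  have hfin : ∑' n : ℕ, ∫⁻ u in Ioi (0:ℝ),
      ‖((bker h n u * Real.exp (-(t*u)) : ℝ):ℂ) * φ u‖₊ ≠ ⊤ := by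
    have heq : ∀ n : ℕ, ∫⁻ u in Ioi (0:ℝ),
        ‖((bker h n u * Real.exp (-(t*u)) : ℝ):ℂ) * φ u‖₊ = ENNReal.ofReal (aB φ h t n) := by
      intro n
      simp_rw [← enorm_eq_nnnorm]
      rw [← ofReal_integral_norm_eq_lintegral_enorm (int_bkerC hφ hh ht n)]
      congr 1
      refine setIntegral_congr_fun measurableSet_Ioi fun u hu => ?_
      have hu' : (0:ℝ) < u := hu
      rw [norm_mul, Complex.norm_real, Real.norm_eq_abs, abs_mul,
        abs_of_nonneg (ker_nonneg hh hu' n), abs_of_nonneg (Real.exp_pos _).le]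
    rw [tsum_congr heq, ← ENNReal.ofReal_tsum_of_nonneg (fun n => aB_nonneg hh n)
      (summable_aB hφ hh ht)]
    exact ENNReal.ofReal_ne_top
  rw [← MeasureTheory.integral_tsum hmeas hfin]
  refine setIntegral_congr_fun measurableSet_Ioi fun u hu => ?_
  have hu' : (0:ℝ) < u := hu
  have H1 := (hasSum_ker hh hu').mul_right (Real.exp (-(t*u)))
  have H2 := H1.map Complex.ofRealHom Complex.continuous_ofReal
  have H3 := H2.mul_right (φ u)
  exact H3.tsum_eq

lemma geom_id {m : ℕ} (hm : 1 ≤ m) {u : ℝ} (hu : 0 < u) (t : ℝ) :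
    ∑ i ∈ Finset.range m, Lker (m:ℝ) u * Real.exp (-((t+(i:ℝ))*u))
      = (m:ℝ) * (Lker 1 u * Real.exp (-(t*u))) := by
  have hm0 : (0:ℝ) < m := Nat.cast_pos.mpr hm
  set r : ℝ := Real.exp (-u) with hr
  have hr1 : r < 1 := by
    rw [hr]; exact Real.exp_lt_one_iff.mpr (by linarith)
  have hrne : r ≠ 1 := ne_of_lt hr1
  have hterm : ∀ i ∈ Finset.range m, Lker (m:ℝ) u * Real.exp (-((t+(i:ℝ))*u))
      = (Lker (m:ℝ) u * Real.exp (-(t*u))) * r^i := by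
    intro i _
    have he : Real.exp (-((t+(i:ℝ))*u)) = Real.exp (-(t*u)) * r ^ i := by
      rw [hr, ← Real.exp_nat_mul, ← Real.exp_add]
      congr 1; ring
    rw [he]; ring
  rw [Finset.sum_congr rfl hterm, ← Finset.mul_sum, geom_sum_eq hrne m]
  have hrm : r ^ m = Real.exp (-((m:ℝ)*u)) := by
    rw [hr, ← Real.exp_nat_mul]; congr 1; ring
  rw [hrm]
  have hA : (0:ℝ) < 1 - Real.exp (-((m:ℝ)*u)) := by
    have := exp_neg_lt_one hm0 hu; linarith
  have hB : (0:ℝ) < 1 - Real.exp (-(1*u)) := by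
    have := exp_neg_lt_one one_pos hu; linarith
  have hBr : r - 1 ≠ 0 := sub_ne_zero.mpr hrne
  unfold Lker
  simp only [one_mul, hr]
  rw [show -(1*u) = -u by ring] at hB
  have hBr' : Real.exp (-u) - 1 ≠ 0 := hBr
  field_simp
  ring
end Aux4d

noncomputable section Aux4e
open MeasureTheory Filter Set

lemma Bop_sum {φ : ℝ → ℂ} (hφ : MemDL φ) {m : ℕ} (hm : 1 ≤ m) {t : ℝ} (ht : 0 < t) :
    Bop 1 (Lap φ) t = (1/(m:ℂ)) * ∑ i ∈ Finset.range m, Bop (m:ℝ) (Lap φ) (t + i) := by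
  have hm0 : (0:ℝ) < m := Nat.cast_pos.mpr hm
  have hint : ∀ i ∈ Finset.range m, IntegrableOn
      (fun u => ((Lker (m:ℝ) u * Real.exp (-((t+(i:ℝ))*u)) : ℝ):ℂ) * φ u) (Ioi 0) := by
    intro i _
    apply master_complex hφ ht (A := 1) (B := (m:ℝ)) zero_le_one hm0.le
      (c := fun u => Lker (m:ℝ) u * Real.exp (-((t+(i:ℝ))*u))) (by unfold Lker; fun_prop)
    intro u hu
    have hu' : (0:ℝ) < u := hu
    have hL0 := Lker_nonneg hm0 hu'
    have hL1 := Lker_le hm0 hu'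
    rw [abs_mul, abs_of_nonneg hL0, abs_of_nonneg (Real.exp_pos _).le]
    have hexp : Real.exp (-((t+(i:ℝ))*u)) ≤ Real.exp (-(t*u)) := by
      apply Real.exp_le_exp.mpr
      have : (0:ℝ) ≤ (i:ℝ) := Nat.cast_nonneg i
      nlinarith
    exact mul_le_mul hL1 hexp (Real.exp_pos _).le (by positivity)
  have hsum : ∑ i ∈ Finset.range m, Bop (m:ℝ) (Lap φ) (t + i)
      = (m:ℂ) * ∫ u in Ioi (0:ℝ), ((Lker 1 u * Real.exp (-(t*u)) : ℝ):ℂ) * φ u := by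
    have hBi : ∀ i ∈ Finset.range m, Bop (m:ℝ) (Lap φ) (t+(i:ℝ))
        = ∫ u in Ioi (0:ℝ), ((Lker (m:ℝ) u * Real.exp (-((t+(i:ℝ))*u)) : ℝ):ℂ) * φ u := by
      intro i _
      have hti : (0:ℝ) < t + (i:ℝ) := by
        have : (0:ℝ) ≤ (i:ℝ) := Nat.cast_nonneg i
        linarith
      exact Bop_eq hφ hm0 hti
    rw [Finset.sum_congr rfl hBi, ← integral_finset_sum _ hint, ← integral_const_mul]
    refine setIntegral_congr_fun measurableSet_Ioi fun u hu => ?_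
    have hu' : (0:ℝ) < u := hu
    have hg := geom_id hm hu' t
    calc ∑ i ∈ Finset.range m, ((Lker (m:ℝ) u * Real.exp (-((t+(i:ℝ))*u)) : ℝ):ℂ) * φ u
        = (((∑ i ∈ Finset.range m, Lker (m:ℝ) u * Real.exp (-((t+(i:ℝ))*u)) : ℝ)):ℂ) * φ u := by
          rw [← Finset.sum_mul]; push_cast; ring
      _ = (m:ℂ) * (((Lker 1 u * Real.exp (-(t*u)) : ℝ):ℂ) * φ u) := by
          rw [hg]; push_cast; ring
  rw [Bop_eq hφ one_pos ht, hsum, ← mul_assoc, one_div,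
    inv_mul_cancel₀ (by exact_mod_cast (Nat.cast_pos.mpr hm).ne' : (m:ℂ) ≠ 0), one_mul]

end Aux4e


/-- for `φ ∈ 𝒟(ℒ)`, `f = ℒ(φ)`, `m ≥ 1`, the Bernoulli series defining
`(B f)(t)` and `(B_m f)(t+i)` (`0 ≤ i ≤ m−1`) converge absolutely and locally uniformly on
`(0,∞)`, and `(B f)(t) = (1/m) Σ_{i=0}^{m−1} (B_m f)(t+i)` for every `t > 0`. -/
theorem stmt4 (φ : ℝ → ℂ) (hφ : MemDL φ) (m : ℕ) (hm : 1 ≤ m) :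
    ALUOn (BTerm 1 (Lap φ)) (Ioi 0) ∧
    (∀ i < m, ALUOn (fun n t => BTerm (m : ℝ) (Lap φ) n (t + i)) (Ioi 0)) ∧
    ∀ t ∈ Ioi (0:ℝ),
      Bop 1 (Lap φ) t = (1 / (m : ℂ)) * ∑ i ∈ Finset.range m, Bop (m : ℝ) (Lap φ) (t + i) := by
  refine ⟨?_, ?_, ?_⟩
  · have h := aluBTerm hφ one_pos 0 le_rfl
    have he : (fun (n:ℕ) (t:ℝ) => BTerm 1 (Lap φ) n (t + 0)) = BTerm 1 (Lap φ) := by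
      funext n t; rw [add_zero]
    rwa [he] at h
  · intro i _
    exact aluBTerm hφ (Nat.cast_pos.mpr hm) (i:ℝ) (Nat.cast_nonneg i)
  · intro t ht
    exact Bop_sum hφ hm ht
end

section
/- Let φ ∈ 𝒟(ℒ) and f = ℒ(φ). For Re(s) > 1 and t > 0 set f_{−s}(t) = (1/Γ(s)) ∫₀^∞ e^{−tu} φ(u) u^{s−1} du. Then for each fixed t > 0 the map s ↦ f_{−s}(t) is holomorphic on {Re(s) > 1}, and for every s with Re(s) > 1 the function t ↦ f_{−s}(t) is differentiable on (0,∞) with (d/dt) f_{−s}(t) = −s f_{−s−1}(t). -/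
open MeasureTheory Filter Set

namespace Stmt6Aux

open MeasureTheory Filter Set

lemma rpow_mul_exp_le {c d : ℝ} (hc : 0 < c) (hd : 0 < d) {u : ℝ} (hu : 0 ≤ u) :
    u ^ c * Real.exp (-(d * u)) ≤ (c / d) ^ c := by
  have hv : (0:ℝ) ≤ d / c * u := by positivity
  have h2 : d / c * u ≤ Real.exp (d / c * u) := by
    linarith [Real.add_one_le_exp (d / c * u)]
  have key : u ^ c ≤ (c / d) ^ c * Real.exp (d * u) := by
    have h3 : u = c / d * (d / c * u) := by field_simp
    calc u ^ c = (c / d * (d / c * u)) ^ c := by rw [← h3]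
      _ = (c / d) ^ c * (d / c * u) ^ c := Real.mul_rpow (by positivity) hv
      _ ≤ (c / d) ^ c * Real.exp (d / c * u) ^ c :=
          mul_le_mul_of_nonneg_left (Real.rpow_le_rpow hv h2 hc.le) (by positivity)
      _ = (c / d) ^ c * Real.exp (d * u) := by
          rw [← Real.exp_mul]
          congr 1
          field_simp
  calc u ^ c * Real.exp (-(d * u))
      ≤ (c / d) ^ c * Real.exp (d * u) * Real.exp (-(d * u)) := by
        exact mul_le_mul_of_nonneg_right key (Real.exp_nonneg _)
    _ = (c / d) ^ c := by
        rw [mul_assoc, ← Real.exp_add]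
        simp

lemma intAux {φ : ℝ → ℂ} (hφ : MemDL φ) {x c : ℝ} (hx : 0 < x) (hc : 0 < c) :
    IntegrableOn (fun u => Real.exp (-(x * u)) * ‖φ u‖ * u ^ c) (Ioi (0:ℝ)) := by
  have hbase := (hφ.2.2 (x/2) (by positivity)).const_mul ((c / (x/2)) ^ c)
  refine hbase.mono' ?_ ?_
  · have m1 : Measurable fun u : ℝ => Real.exp (-(x * u)) :=
      Real.measurable_exp.comp ((measurable_const.mul measurable_id).neg)
    refine ((m1.mul hφ.1.norm).aestronglyMeasurable).mul ?_
    refine (ContinuousOn.aestronglyMeasurable ?_ measurableSet_Ioi)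
    intro u hu
    exact (Real.continuousAt_rpow_const u c (Or.inl (ne_of_gt hu))).continuousWithinAt
  · filter_upwards [self_mem_ae_restrict measurableSet_Ioi] with u hu
    have hu0 : (0:ℝ) < u := hu
    rw [Real.norm_eq_abs, abs_of_nonneg (by positivity)]
    have hsplit : Real.exp (-(x * u)) = Real.exp (-(x/2 * u)) * Real.exp (-(x/2 * u)) := by
      rw [← Real.exp_add]; ring_nf
    calc Real.exp (-(x * u)) * ‖φ u‖ * u ^ c
        = u ^ c * Real.exp (-(x/2 * u)) * (Real.exp (-(x/2 * u)) * ‖φ u‖) := by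
          rw [hsplit]; ring
      _ ≤ (c / (x/2)) ^ c * (Real.exp (-(x/2 * u)) * ‖φ u‖) := by
          apply mul_le_mul_of_nonneg_right (rpow_mul_exp_le hc (by positivity) hu0.le)
          positivity

lemma measAux {φ : ℝ → ℂ} (hφ : MemDL φ) (t' : ℝ) (s : ℂ) :
    AEStronglyMeasurable (fun u : ℝ => Complex.exp (-(t' * u : ℝ)) * φ u * (u:ℂ) ^ (s - 1))
      (volume.restrict (Ioi 0)) := by
  have m1 : Measurable fun u : ℝ => Complex.exp (-(t' * u : ℝ)) :=
    Complex.measurable_exp.comp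
      ((Complex.measurable_ofReal.comp (measurable_const.mul measurable_id)).neg)
  refine ((m1.mul hφ.1).aestronglyMeasurable).mul ?_
  refine ContinuousOn.aestronglyMeasurable ?_ measurableSet_Ioi
  intro u hu
  exact (Complex.continuousAt_ofReal_cpow_const u _ (Or.inr (ne_of_gt hu))).continuousWithinAt

lemma normAux (t' u : ℝ) (hu : 0 < u) (z : ℂ) (w : ℂ) :
    ‖Complex.exp (-(t' * u : ℝ)) * w * (u:ℂ) ^ z‖
      = Real.exp (-(t' * u)) * ‖w‖ * u ^ z.re := by
  simp [norm_mul, Complex.norm_exp,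
    Complex.norm_cpow_eq_rpow_re_of_pos hu]

lemma intF {φ : ℝ → ℂ} (hφ : MemDL φ) {t : ℝ} (ht : 0 < t) {s : ℂ} (hs : 1 < s.re) :
    IntegrableOn (fun u : ℝ => Complex.exp (-(t * u : ℝ)) * φ u * (u:ℂ) ^ (s - 1))
      (Ioi (0:ℝ)) := by
  refine (intAux hφ ht (c := s.re - 1) (by linarith)).mono' (measAux hφ t s) ?_
  filter_upwards [self_mem_ae_restrict measurableSet_Ioi] with u hu
  have := normAux t u hu (s - 1) (φ u)
  simp only [Complex.sub_re, Complex.one_re] at this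
  exact this.le


lemma rpow_between {u a a1 a2 : ℝ} (hu : 0 < u) (h1 : a1 ≤ a) (h2 : a ≤ a2) :
    u ^ a ≤ u ^ a1 + u ^ a2 := by
  rcases le_or_gt u 1 with h | h
  · have := Real.rpow_le_rpow_of_exponent_ge hu h h1
    have h3 := Real.rpow_nonneg hu.le a2
    linarith
  · have := Real.rpow_le_rpow_of_exponent_le h.le h2
    have h3 := Real.rpow_nonneg hu.le a1
    linarith

lemma logBound {ε u c : ℝ} (hε : 0 < ε) (hu : 0 < u) (h1 : ε ≤ c) (h2 : c ≤ 3*ε) :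
    u ^ c * |Real.log u| ≤
      (2/ε) * (u ^ (ε/2) + u ^ (3*ε)) + (u ^ (1+ε) + u ^ (1+3*ε)) := by
  rcases le_or_gt u 1 with h | h
  · have hlog : |Real.log u| ≤ (2/ε) * u ^ (-(ε/2)) := by
      rw [abs_of_nonpos (Real.log_nonpos hu.le h)]
      have h3 := Real.log_le_rpow_div (inv_nonneg.2 hu.le) (half_pos hε)
      rw [Real.log_inv, Real.inv_rpow hu.le] at h3
      calc -Real.log u ≤ (u ^ (ε/2))⁻¹ / (ε/2) := h3
        _ = (2/ε) * u ^ (-(ε/2)) := by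
            rw [Real.rpow_neg hu.le]
            field_simp
    have step : u ^ c * |Real.log u| ≤ (2/ε) * u ^ (c - ε/2) := by
      calc u ^ c * |Real.log u| ≤ u ^ c * ((2/ε) * u ^ (-(ε/2))) :=
            mul_le_mul_of_nonneg_left hlog (Real.rpow_nonneg hu.le c)
        _ = (2/ε) * (u ^ c * u ^ (-(ε/2))) := by ring
        _ = (2/ε) * u ^ (c - ε/2) := by
            rw [sub_eq_add_neg, Real.rpow_add hu]
    have step2 : u ^ (c - ε/2) ≤ u ^ (ε/2) + u ^ (3*ε) :=
      rpow_between hu (by linarith) (by linarith)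
    have step3 : (2/ε) * u ^ (c - ε/2) ≤ (2/ε) * (u ^ (ε/2) + u ^ (3*ε)) :=
      mul_le_mul_of_nonneg_left step2 (by positivity)
    have h4 : (0:ℝ) ≤ u ^ (1+ε) + u ^ (1+3*ε) := by positivity
    linarith
  · have hlog : |Real.log u| ≤ u := by
      rw [abs_of_nonneg (Real.log_nonneg h.le)]
      linarith [Real.log_le_sub_one_of_pos hu]
    have step : u ^ c * |Real.log u| ≤ u ^ (c+1) := by
      calc u ^ c * |Real.log u| ≤ u ^ c * u :=
            mul_le_mul_of_nonneg_left hlog (Real.rpow_nonneg hu.le c)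
        _ = u ^ (c+1) := (Real.rpow_add_one hu.ne' c).symm
    have step2 : u ^ (c+1) ≤ u ^ (1+ε) + u ^ (1+3*ε) :=
      rpow_between hu (by linarith) (by linarith)
    have h4 : (0:ℝ) ≤ (2/ε) * (u ^ (ε/2) + u ^ (3*ε)) := by positivity
    linarith

lemma hasDerivAt_t {φ : ℝ → ℂ} (hφ : MemDL φ) {s : ℂ} (hs : 1 < s.re) {t : ℝ} (ht : 0 < t) :
    HasDerivAt
      (fun t' => ∫ u in Ioi (0:ℝ), Complex.exp (-(t' * u : ℝ)) * φ u * (u:ℂ) ^ (s - 1))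
      (∫ u in Ioi (0:ℝ), -(u:ℂ) * (Complex.exp (-(t * u : ℝ)) * φ u * (u:ℂ) ^ (s - 1))) t := by
  have hres := hasDerivAt_integral_of_dominated_loc_of_deriv_le
    (F := fun t' u => Complex.exp (-(t' * u : ℝ)) * φ u * (u:ℂ) ^ (s - 1))
    (F' := fun t' u => -(u:ℂ) * (Complex.exp (-(t' * u : ℝ)) * φ u * (u:ℂ) ^ (s - 1)))
    (x₀ := t) (bound := fun u => Real.exp (-(t/2 * u)) * ‖φ u‖ * u ^ s.re)
    (Metric.ball_mem_nhds t (half_pos ht))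
    (Eventually.of_forall fun t' => measAux hφ t' s)
    (intF hφ ht hs)
    ((Complex.measurable_ofReal.neg).aestronglyMeasurable.mul (measAux hφ t s))
    ?_ (intAux hφ (half_pos ht) (by linarith)) ?_
  · exact hres.2
  · filter_upwards [self_mem_ae_restrict measurableSet_Ioi] with u hu t' ht'
    have hu0 : (0:ℝ) < u := hu
    have ht2 : t/2 < t' := by
      rw [Metric.mem_ball, Real.dist_eq, abs_lt] at ht'
      linarith [ht'.1]
    rw [norm_mul, normAux t' u hu0]
    have e0 : ‖-(u:ℂ)‖ = u := by
      rw [norm_neg, Complex.norm_real, Real.norm_eq_abs, abs_of_pos hu0]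
    rw [e0]
    simp only [Complex.sub_re, Complex.one_re]
    have e2 : u * (Real.exp (-(t' * u)) * ‖φ u‖ * u ^ (s.re - 1))
        = Real.exp (-(t' * u)) * ‖φ u‖ * u ^ s.re := by
      have h5 : u ^ s.re = u ^ (s.re - 1) * u := by
        rw [← Real.rpow_add_one hu0.ne' (s.re - 1), sub_add_cancel]
      rw [h5]; ring
    rw [e2]
    exact mul_le_mul_of_nonneg_right
      (mul_le_mul_of_nonneg_right (Real.exp_le_exp.2 (by nlinarith)) (norm_nonneg _))
      (Real.rpow_nonneg hu0.le _)
  · filter_upwards [self_mem_ae_restrict measurableSet_Ioi] with u hu t' ht'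
    have hu0 : (0:ℝ) < u := hu
    have h1 : HasDerivAt (fun z : ℂ => Complex.exp (-(z * (u:ℂ))))
        (Complex.exp (-((t':ℂ) * u)) * -(u:ℂ)) (t':ℂ) := by
      have := (((hasDerivAt_id ((t':ℂ))).mul_const (u:ℂ)).neg).cexp
      simpa using this
    have hz : HasDerivAt (fun z : ℂ => Complex.exp (-(z * (u:ℂ))) * φ u * (u:ℂ) ^ (s - 1))
        (-(u:ℂ) * (Complex.exp (-((t':ℂ) * u)) * φ u * (u:ℂ) ^ (s - 1))) (t':ℂ) := by
      have h2 := (h1.mul_const (φ u)).mul_const ((u:ℂ) ^ (s - 1))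
      exact h2.congr_deriv (by ring)
    have h3 := hz.comp_ofReal
    have hfun : (fun t'' : ℝ => Complex.exp (-(t'' * u : ℝ)) * φ u * (u:ℂ) ^ (s - 1))
        = fun t'' : ℝ => Complex.exp (-((t'':ℂ) * u)) * φ u * (u:ℂ) ^ (s - 1) := by
      funext y; norm_cast
    have hval : -(u:ℂ) * (Complex.exp (-(t' * u : ℝ)) * φ u * (u:ℂ) ^ (s - 1))
        = -(u:ℂ) * (Complex.exp (-((t':ℂ) * u)) * φ u * (u:ℂ) ^ (s - 1)) := by
      norm_cast
    rw [hfun, hval]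
    exact h3

lemma hasDerivAt_s {φ : ℝ → ℂ} (hφ : MemDL φ) {t : ℝ} (ht : 0 < t) {s : ℂ} (hs : 1 < s.re) :
    HasDerivAt
      (fun s' : ℂ => ∫ u in Ioi (0:ℝ), Complex.exp (-(t * u : ℝ)) * φ u * (u:ℂ) ^ (s' - 1))
      (∫ u in Ioi (0:ℝ),
        Complex.exp (-(t * u : ℝ)) * φ u * ((u:ℂ) ^ (s - 1) * Complex.log u)) s := by
  set ε := (s.re - 1) / 2 with hεdef
  have hε : 0 < ε := by rw [hεdef]; linarith
  have m1 : Measurable fun u : ℝ => Complex.exp (-(t * u : ℝ)) :=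
    Complex.measurable_exp.comp
      ((Complex.measurable_ofReal.comp (measurable_const.mul measurable_id)).neg)
  have hres := hasDerivAt_integral_of_dominated_loc_of_deriv_le
    (F := fun s' u => Complex.exp (-(t * u : ℝ)) * φ u * (u:ℂ) ^ (s' - 1))
    (F' := fun s' u => Complex.exp (-(t * u : ℝ)) * φ u * ((u:ℂ) ^ (s' - 1) * Complex.log u))
    (x₀ := s)
    (bound := fun u => Real.exp (-(t * u)) * ‖φ u‖ *
      ((2/ε) * (u ^ (ε/2) + u ^ (3*ε)) + (u ^ (1+ε) + u ^ (1+3*ε))))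
    (Metric.ball_mem_nhds s hε)
    (Eventually.of_forall fun s' => measAux hφ t s')
    (intF hφ ht hs)
    ?_ ?_ ?_ ?_
  · exact hres.2
  · refine ((m1.mul hφ.1).aestronglyMeasurable).mul ?_
    refine ContinuousOn.aestronglyMeasurable ?_ measurableSet_Ioi
    intro u hu
    refine ContinuousWithinAt.mul ?_ ?_
    · exact (Complex.continuousAt_ofReal_cpow_const u _
        (Or.inr (ne_of_gt hu))).continuousWithinAt
    · exact ((continuousAt_clog (Complex.ofReal_mem_slitPlane.2 hu)).comp
        Complex.continuous_ofReal.continuousAt).continuousWithinAt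
  · filter_upwards [self_mem_ae_restrict measurableSet_Ioi] with u hu s' hs'
    have hu0 : (0:ℝ) < u := hu
    have h6 : s.re - 1 = 2*ε := by rw [hεdef]; ring
    have h5 : |s'.re - s.re| < ε := by
      rw [Metric.mem_ball, Complex.dist_eq] at hs'
      have h4 : |s'.re - s.re| ≤ ‖s' - s‖ := by
        simpa [Complex.sub_re] using Complex.abs_re_le_norm (s' - s)
      exact lt_of_le_of_lt h4 hs'
    rw [abs_lt] at h5
    have e1 : ‖Complex.exp (-(t * u : ℝ)) * φ u * ((u:ℂ) ^ (s' - 1) * Complex.log u)‖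
        = Real.exp (-(t * u)) * ‖φ u‖ * (u ^ (s'.re - 1) * |Real.log u|) := by
      rw [norm_mul, norm_mul, norm_mul, ← Complex.ofReal_log hu0.le]
      simp [Complex.norm_exp, Complex.norm_cpow_eq_rpow_re_of_pos hu0,
        Complex.norm_real, Complex.sub_re, Complex.one_re]
    rw [e1]
    exact mul_le_mul_of_nonneg_left
      (logBound hε hu0 (by linarith [h5.1]) (by linarith [h5.2])) (by positivity)
  · have hrw : (fun u => Real.exp (-(t * u)) * ‖φ u‖ *
        ((2/ε) * (u ^ (ε/2) + u ^ (3*ε)) + (u ^ (1+ε) + u ^ (1+3*ε))))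
        = fun u => (2/ε) * ((Real.exp (-(t * u)) * ‖φ u‖ * u ^ (ε/2))
            + (Real.exp (-(t * u)) * ‖φ u‖ * u ^ (3*ε)))
          + ((Real.exp (-(t * u)) * ‖φ u‖ * u ^ (1+ε))
            + (Real.exp (-(t * u)) * ‖φ u‖ * u ^ (1+3*ε))) := by
      funext u; ring
    rw [hrw]
    exact (((intAux hφ ht (by linarith)).add (intAux hφ ht (by linarith))).const_mul _).add
      ((intAux hφ ht (by linarith)).add (intAux hφ ht (by linarith)))
  · filter_upwards [self_mem_ae_restrict measurableSet_Ioi] with u hu s' hs'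
    have hu0 : (0:ℝ) < u := hu
    have h0 : ((u:ℝ):ℂ) ≠ 0 := Complex.ofReal_ne_zero.2 hu0.ne'
    have h1 : HasDerivAt (fun y : ℂ => (u:ℂ) ^ (y - 1))
        ((u:ℂ) ^ (s' - 1) * Complex.log u) s' := by
      have h2 := ((Complex.hasStrictDerivAt_const_cpow (x := ((u:ℝ):ℂ)) (y := s' - 1)
        (Or.inl h0)).hasDerivAt).comp s' ((hasDerivAt_id s').sub_const 1)
      exact h2.congr_deriv (mul_one _)
    simpa using h1.const_mul (Complex.exp (-(t * u : ℝ)) * φ u)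

end Stmt6Aux

/-- for `φ ∈ 𝒟(ℒ)`, the Laplace–Mellin transform `f_{−s}(t)` is, for each fixed
`t > 0`, holomorphic in `s` on `{Re s > 1}`, and for each `s` with `Re s > 1` it is
differentiable in `t` on `(0,∞)` with `(d/dt) f_{−s}(t) = −s f_{−s−1}(t)`. -/


theorem stmt6 (φ : ℝ → ℂ) (hφ : MemDL φ) :
    (∀ t ∈ Ioi (0:ℝ), DifferentiableOn ℂ (fun s => LM φ s t) {s : ℂ | 1 < s.re}) ∧
    ∀ s : ℂ, 1 < s.re → ∀ t ∈ Ioi (0:ℝ),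
      HasDerivAt (fun t' => LM φ s t') (-s * LM φ (s + 1) t) t := by
  constructor
  · intro t ht s hs
    have ht0 : (0:ℝ) < t := ht
    have hs1 : 1 < s.re := hs
    have h1 : DifferentiableAt ℂ (fun s' : ℂ => 1 / Complex.Gamma s') s := by
      simpa [one_div] using (Complex.differentiable_one_div_Gamma s)
    have h2 : DifferentiableAt ℂ
        (fun s' : ℂ => ∫ u in Ioi (0:ℝ), Complex.exp (-(t * u : ℝ)) * φ u * (u:ℂ) ^ (s' - 1))
        s := (Stmt6Aux.hasDerivAt_s hφ ht0 hs1).differentiableAt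
    exact (h1.mul h2).differentiableWithinAt
  · intro s hs t ht
    have ht0 : (0:ℝ) < t := ht
    have hΓ : Complex.Gamma s ≠ 0 := Complex.Gamma_ne_zero_of_re_pos (by linarith)
    have hs0 : s ≠ 0 := by
      intro h; rw [h] at hs; norm_num at hs
    have hG := (Stmt6Aux.hasDerivAt_t hφ hs ht0).const_mul (1 / Complex.Gamma s)
    have hval : (1 / Complex.Gamma s) *
        ∫ u in Ioi (0:ℝ), -(u:ℂ) * (Complex.exp (-(t * u : ℝ)) * φ u * (u:ℂ) ^ (s - 1))
        = -s * LM φ (s + 1) t := by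
      have hI : (∫ u in Ioi (0:ℝ),
            -(u:ℂ) * (Complex.exp (-(t * u : ℝ)) * φ u * (u:ℂ) ^ (s - 1)))
          = -∫ u in Ioi (0:ℝ), Complex.exp (-(t * u : ℝ)) * φ u * (u:ℂ) ^ (s + 1 - 1) := by
        rw [← integral_neg]
        refine setIntegral_congr_fun measurableSet_Ioi ?_
        intro u hu
        have h0 : ((u:ℝ):ℂ) ≠ 0 := Complex.ofReal_ne_zero.2 (ne_of_gt hu)
        have hpow : ((u:ℝ):ℂ) ^ (s + 1 - 1) = (u:ℂ) ^ (s - 1) * (u:ℂ) := by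
          rw [show s + 1 - 1 = (s - 1) + 1 by ring, Complex.cpow_add _ _ h0, Complex.cpow_one]
        simp only [hpow]
        ring
      rw [LM, hI, Complex.Gamma_add_one s hs0]
      field_simp
    rw [LM] at hval ⊢
    rw [← hval] at *
    exact hG
end
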